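/- arXiv:2006.10536 — 3 statements merged into one kernel-verified Lean document; each statement's English description precedes it below -/
import Mathlib

section
/- The Galerkin solutions satisfy the following a priori bounds with a constant C > 0 independent of m: (a) ‖u^m‖_{L^∞(0,T;L²(Ω))} + ‖u^m‖_{L²(0,T;H¹₀(Ω))} ≤ C(‖u^m_0‖_{0,Ω} + ‖u^m_{s0}‖_{0,B} + |B|^{1/2}); (b) ‖w^m‖_{L^∞(0,T;L²(B))} + ‖w^m‖_{L²(0,T;H¹(B))} ≤ C(‖u^m_0‖_{0,Ω} + ‖u^m_{s0}‖_{0,B} + |B|^{1/2}); (c) ‖X^m‖_{L^∞(0,T;H¹(B))} ≤ C(‖u^m_0‖_{0,Ω} + ‖u^m_{s0}‖_{0,B} + |B|^{1/2}); (d) ‖∂X^m/∂t‖_{L^∞(0,T;L²(B))} + ‖∂X^m/∂t‖_{L^∞(0,T;H¹(B))} ≤ C(‖u^m_0‖_{0,Ω} + ‖u^m_{s0}‖_{0,B} + |B|^{1/2}), where |B| is the measure of B. -/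
/-!
STATEMENT 7 (Proposition `pr:apriori`).  The Galerkin solutions satisfy the
following a priori bounds with a constant `C > 0` independent of `m`:
(a) `‖u^m‖_{L^∞(0,T;L²(Ω))} + ‖u^m‖_{L²(0,T;H¹₀(Ω))}
      ≤ C(‖u^m_0‖_{0,Ω} + ‖u^m_{s0}‖_{0,B} + |B|^{1/2})`;
(b) `‖w^m‖_{L^∞(0,T;L²(B))} + ‖w^m‖_{L²(0,T;H¹(B))} ≤ C(...)`;
(c) `‖X^m‖_{L^∞(0,T;H¹(B))} ≤ C(...)`;
(d) `‖∂X^m/∂t‖_{L^∞(0,T;L²(B))} + ‖∂X^m/∂t‖_{L^∞(0,T;H¹(B))} ≤ C(...)`,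
where `|B|` is the measure of `B` (which enters through the initial datum
`X₀(s) = s`, whose `H¹(B)`-norm is bounded by a multiple of `|B|^{1/2}`).

Abstract setting as in the previous statements; `u^m_0 = u^m(0)`,
`u^m_{s0} = w^m(0)`; the `L²(Ω)`-norm of `u` is `‖jV u‖`, its `H¹₀(Ω)`-norm
is `‖u‖_V`; the `L²(B)`-norm of `z` is `‖ιB z‖`, its `H¹(B)`-norm is `‖z‖`.
-/

open MeasureTheory Set
open scoped ENNReal RealInnerProductSpace

set_option maxHeartbeats 1000000

section Helpers

variable {E F : Type*} [NormedAddCommGroup E] [InnerProductSpace ℝ E]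
  [NormedAddCommGroup F] [InnerProductSpace ℝ F]

lemma aux_sq_le (x y : ℝ) (hx : 0 ≤ x) (hy : 0 ≤ y) (h : x ^ 2 ≤ y * x) : x ≤ y := by
  rcases eq_or_lt_of_le hx with h0 | h0
  · linarith
  · have : x * x ≤ y * x := by nlinarith
    exact le_of_mul_le_mul_right this h0

lemma aux_inner_span_zero {ι : Type*} (g : ι → E) (y : E)
    (h : ∀ i, ⟪g i, y⟫ = 0) {x : E}
    (hx : x ∈ Submodule.span ℝ (Set.range g)) : ⟪x, y⟫ = 0 := by
  induction hx using Submodule.span_induction with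
  | mem x hxm => obtain ⟨i, rfl⟩ := hxm; exact h i
  | zero => simp
  | add x y' hx hy ihx ihy => rw [inner_add_left, ihx, ihy]; ring
  | smul c x hx ih => rw [real_inner_smul_left, ih]; ring

lemma aux_map_span {ι : Type*} (L : E →L[ℝ] F) (g : ι → E) {x : E}
    (hx : x ∈ Submodule.span ℝ (Set.range g)) :
    L x ∈ Submodule.span ℝ (Set.range fun i => L (g i)) := by
  induction hx using Submodule.span_induction with
  | mem x hxm =>
      obtain ⟨i, rfl⟩ := hxm
      exact Submodule.subset_span ⟨i, rfl⟩
  | zero => rw [map_zero]; exact Submodule.zero_mem _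
  | add x y hx hy ihx ihy => rw [map_add]; exact Submodule.add_mem _ ihx ihy
  | smul c x hx ih => rw [_root_.map_smul]; exact Submodule.smul_mem _ _ ih

lemma aux_deriv_mem [CompleteSpace E] {ι : Type*} [Finite ι] (g : ι → E)
    {T : ℝ} (hT : 0 < T) {f : ℝ → E} {f' : E} {t : ℝ} (ht : t ∈ Icc 0 T)
    (hf : ∀ s ∈ Icc 0 T, f s ∈ Submodule.span ℝ (Set.range g))
    (hd : HasDerivWithinAt f f' (Icc 0 T) t) :
    f' ∈ Submodule.span ℝ (Set.range g) := by
  set S := Submodule.span ℝ (Set.range g) with hS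
  haveI : FiniteDimensional ℝ S := by
    apply FiniteDimensional.span_of_finite
    exact Set.finite_range g
  haveI : CompleteSpace S := FiniteDimensional.complete ℝ S
  set P : E →L[ℝ] E := S.subtypeL.comp (S.orthogonalProjectionOnto) with hP
  have hPf : ∀ s ∈ Icc 0 T, P (f s) = f s := by
    intro s hs
    have hmem : f s ∈ S := hf s hs
    simp only [hP, ContinuousLinearMap.comp_apply, Submodule.subtypeL_apply]
    exact Submodule.starProjection_eq_self_iff.2 hmem
  have hd2 : HasDerivWithinAt (fun s => P (f s)) (P f') (Icc 0 T) t :=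
    P.hasFDerivAt.comp_hasDerivWithinAt t hd
  have hd3 : HasDerivWithinAt f (P f') (Icc 0 T) t :=
    hd2.congr (fun s hs => (hPf s hs).symm) ((hPf t ht).symm)
  have hu : UniqueDiffWithinAt ℝ (Icc 0 T) t := (uniqueDiffOn_Icc hT) t ht
  have : P f' = f' := by
    rw [← hd3.derivWithin hu, ← hd.derivWithin hu]
  rw [← this]
  simp only [hP, ContinuousLinearMap.comp_apply, Submodule.subtypeL_apply]
  exact Submodule.coe_mem _

lemma aux_gronwall {T c : ℝ} (hT : 0 < T) (hc : 0 ≤ c) (f f' : ℝ → ℝ)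
    (hd : ∀ t ∈ Icc 0 T, HasDerivWithinAt f (f' t) (Icc 0 T) t)
    (hineq : ∀ t ∈ Icc 0 T, f' t ≤ c * f t) :
    ∀ t ∈ Icc 0 T, f t ≤ f 0 * Real.exp (c * t) := by
  intro t ht
  set g : ℝ → ℝ := fun s => f s * Real.exp (-c * s) with hg
  have hgd : ∀ s ∈ Icc 0 T, HasDerivWithinAt g
      (f' s * Real.exp (-c * s) + f s * (-c * Real.exp (-c * s))) (Icc 0 T) s := by
    intro s hs
    have he : HasDerivWithinAt (fun r => Real.exp (-c * r)) (-c * Real.exp (-c * s))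
        (Icc 0 T) s := by
      have := ((Real.hasDerivAt_exp (-c * s)).comp s
        ((hasDerivAt_id s).const_mul (-c))).hasDerivWithinAt (s := Icc 0 T)
      have he2 : (Real.exp ∘ HMul.hMul (-c)) = (fun r => Real.exp (-c * r)) := rfl
      rw [he2] at this
      convert this using 1
      exacts [rfl, rfl, by ring]
    exact (hd s hs).mul he
  have hanti : AntitoneOn g (Icc 0 T) := by
    apply antitoneOn_of_deriv_nonpos (convex_Icc 0 T)
    · intro s hs
      exact ((hgd s hs).continuousWithinAt)
    · intro s hs
      have hs2 : s ∈ Ioo 0 T := by rwa [interior_Icc] at hs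
      rw [interior_Icc]
      exact ((hgd s (Ioo_subset_Icc_self hs2)).mono Ioo_subset_Icc_self).differentiableWithinAt
    · intro s hs
      rw [interior_Icc] at hs
      have hsIcc : s ∈ Icc 0 T := Ioo_subset_Icc_self hs
      have := (hgd s hsIcc).hasDerivAt (Icc_mem_nhds hs.1 hs.2)
      rw [this.deriv]
      have h1 := hineq s hsIcc
      have h2 : (0:ℝ) < Real.exp (-c * s) := Real.exp_pos _
      nlinarith
  have h0 : (0:ℝ) ∈ Icc 0 T := ⟨le_rfl, hT.le⟩
  have := hanti h0 ht ht.1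
  simp only [hg, mul_zero, neg_mul, Real.exp_zero, mul_one, zero_mul, neg_zero] at this
  have hep : (0:ℝ) < Real.exp (c * t) := Real.exp_pos _
  have h3 : Real.exp (-(c * t)) = (Real.exp (c * t))⁻¹ := by
    rw [Real.exp_neg]
  rw [h3] at this
  calc f t = f t * (Real.exp (c * t))⁻¹ * Real.exp (c * t) := by
        field_simp
    _ ≤ f 0 * Real.exp (c * t) := by
        apply mul_le_mul_of_nonneg_right this hep.le

lemma aux_deriv_inner_const {T : ℝ} (hT : 0 < T) (L : E →L[ℝ] F)
    {f : ℝ → E} {f' : E} {t : ℝ} (ht : t ∈ Icc 0 T)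
    (hf : HasDerivWithinAt f f' (Icc 0 T) t) (y : F) :
    derivWithin (fun s => ⟪L (f s), y⟫) (Icc 0 T) t = ⟪L f', y⟫ := by
  have h1 : HasDerivWithinAt (fun s => L (f s)) (L f') (Icc 0 T) t :=
    L.hasFDerivAt.comp_hasDerivWithinAt t hf
  have h2 := h1.inner ℝ (hasDerivWithinAt_const t (Icc 0 T) y)
  have h3 := h2.derivWithin ((uniqueDiffOn_Icc hT) t ht)
  simpa using h3

lemma aux_eLpNorm_top {T K : ℝ} {F' : Type*} [NormedAddCommGroup F'] (f : ℝ → F')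
    (h : ∀ t ∈ Ioc 0 T, ‖f t‖ ≤ K) :
    eLpNorm f ⊤ (volume.restrict (Ioc 0 T)) ≤ ENNReal.ofReal K := by
  have hae : ∀ᵐ t ∂(volume.restrict (Ioc 0 T)), ‖f t‖ ≤ K :=
    (ae_restrict_mem measurableSet_Ioc).mono h
  have := eLpNorm_le_of_ae_bound (p := ⊤) hae
  simpa using this

lemma aux_eLpNorm_two {T K : ℝ} (hT : 0 < T) {F' : Type*} [NormedAddCommGroup F'] (f : ℝ → F')
    (h : ∀ t ∈ Ioc 0 T, ‖f t‖ ≤ K) :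
    eLpNorm f 2 (volume.restrict (Ioc 0 T)) ≤ ENNReal.ofReal (Real.sqrt T * K) := by
  have hae : ∀ᵐ t ∂(volume.restrict (Ioc 0 T)), ‖f t‖ ≤ K :=
    (ae_restrict_mem measurableSet_Ioc).mono h
  have h2 := eLpNorm_le_of_ae_bound (p := 2) hae
  have hμ : (volume.restrict (Ioc 0 T)) Set.univ = ENNReal.ofReal T := by
    simp [Measure.restrict_apply_univ, Real.volume_Ioc]
  rw [hμ] at h2
  refine h2.trans ?_
  have htr : ((2 : ℝ≥0∞).toReal)⁻¹ = (1/2 : ℝ) := by norm_num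
  rw [htr, ENNReal.ofReal_rpow_of_nonneg hT.le (by norm_num), ← ENNReal.ofReal_mul
    (by positivity), ← Real.sqrt_eq_rpow]

lemma aux_pow2_mono (x y : ℝ) (hx : 0 ≤ x) (h : x ≤ y) : x^2 ≤ y^2 := by nlinarith

lemma aux_thge (Av ip G W κ P : ℝ) (hA : 0 ≤ Av) (hκ : 0 ≤ κ) (hP : P = κ*G*W)
    (h1 : -(G*(W*Real.sqrt Av)) ≤ ip) : Av ≤ 4*((1/2)*Av + κ*ip + P^2) := by
  subst hP
  nlinarith [mul_le_mul_of_nonneg_left h1 hκ,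
    sq_nonneg (Real.sqrt Av - 2*(κ*G*W)), Real.sq_sqrt hA]

lemma aux_c5step (dv kg c2v Av Thv : ℝ) (h1 : dv ≤ kg + c2v * Av)
    (h2 : c2v * Av ≤ c2v * (4 * Thv)) (hkg : 0 ≤ kg) (hc2 : 0 ≤ c2v)
    (hTh : 0 ≤ Thv) : dv ≤ (kg + 4 * c2v) * (Thv + 1) := by
  nlinarith [mul_nonneg hkg hTh]

lemma aux_zero_of_sq (ρ x : ℝ) (hρ : 0 < ρ) (h : ρ/2 * x^2 ≤ 0) : x = 0 := by
  have h2 : x^2 ≤ 0 := by nlinarith [sq_nonneg x]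
  exact sq_eq_zero_iff.mp (le_antisymm h2 (sq_nonneg x))

lemma aux_b2 (d s x y yb : ℝ) (hd : 0 ≤ d) (h1 : -(y*x) ≤ s) (hy : 0 ≤ y)
    (hx : 0 ≤ x) (hyb : y ≤ yb) : -(d*s) - d*x^2 ≤ d/4*yb^2 := by
  nlinarith [mul_le_mul_of_nonneg_left h1 hd, sq_nonneg (yb - 2*x),
    mul_le_mul_of_nonneg_right hyb hx]

lemma aux_b3 (κ ip G rb : ℝ) (hκ : 0 ≤ κ) (h1 : ip ≤ G * rb) :
    κ*ip ≤ κ/2*G^2 + κ/2*rb^2 := by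
  nlinarith [mul_le_mul_of_nonneg_left h1 hκ, sq_nonneg (G - rb)]

lemma aux_b4 (κ ip wb : ℝ) (hκ : 0 ≤ κ) (h1 : ip ≤ wb * wb) : κ*ip ≤ κ*wb^2 := by
  nlinarith [mul_le_mul_of_nonneg_left h1 hκ]

lemma aux_pair {T : ℝ} (hT : 0 < T) {F1 F2 : Type*} [NormedAddCommGroup F1]
    [NormedAddCommGroup F2] (f : ℝ → F1) (g : ℝ → F2) (K1 K2 R : ℝ)
    (h1 : ∀ t ∈ Ioc 0 T, ‖f t‖ ≤ K1) (h2 : ∀ t ∈ Ioc 0 T, ‖g t‖ ≤ K2)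
    (hK1 : 0 ≤ K1) (hK2 : 0 ≤ K2) (hR : K1 + Real.sqrt T * K2 ≤ R) :
    eLpNorm f ⊤ (volume.restrict (Ioc 0 T)) + eLpNorm g 2 (volume.restrict (Ioc 0 T))
      ≤ ENNReal.ofReal R := by
  calc eLpNorm f ⊤ (volume.restrict (Ioc 0 T)) + eLpNorm g 2 (volume.restrict (Ioc 0 T))
      ≤ ENNReal.ofReal K1 + ENNReal.ofReal (Real.sqrt T * K2) :=
        add_le_add (aux_eLpNorm_top f h1) (aux_eLpNorm_two hT g h2)
    _ = ENNReal.ofReal (K1 + Real.sqrt T * K2) :=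
        (ENNReal.ofReal_add hK1 (by positivity)).symm
    _ ≤ ENNReal.ofReal R := ENNReal.ofReal_le_ofReal hR

lemma aux_pair_top {T : ℝ} {F1 F2 : Type*} [NormedAddCommGroup F1]
    [NormedAddCommGroup F2] (f : ℝ → F1) (g : ℝ → F2) (K1 K2 R : ℝ)
    (h1 : ∀ t ∈ Ioc 0 T, ‖f t‖ ≤ K1) (h2 : ∀ t ∈ Ioc 0 T, ‖g t‖ ≤ K2)
    (hK1 : 0 ≤ K1) (hK2 : 0 ≤ K2) (hR : K1 + K2 ≤ R) :
    eLpNorm f ⊤ (volume.restrict (Ioc 0 T)) + eLpNorm g ⊤ (volume.restrict (Ioc 0 T))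
      ≤ ENNReal.ofReal R := by
  calc eLpNorm f ⊤ (volume.restrict (Ioc 0 T)) + eLpNorm g ⊤ (volume.restrict (Ioc 0 T))
      ≤ ENNReal.ofReal K1 + ENNReal.ofReal K2 :=
        add_le_add (aux_eLpNorm_top f h1) (aux_eLpNorm_top g h2)
    _ = ENNReal.ofReal (K1 + K2) := (ENNReal.ofReal_add hK1 hK2).symm
    _ ≤ ENNReal.ofReal R := ENNReal.ofReal_le_ofReal hR

lemma aux_single {T : ℝ} {F1 : Type*} [NormedAddCommGroup F1]
    (f : ℝ → F1) (K1 R : ℝ)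
    (h1 : ∀ t ∈ Ioc 0 T, ‖f t‖ ≤ K1) (hR : K1 ≤ R) :
    eLpNorm f ⊤ (volume.restrict (Ioc 0 T)) ≤ ENNReal.ofReal R :=
  (aux_eLpNorm_top f h1).trans (ENNReal.ofReal_le_ofReal hR)

lemma aux_zero_eLp {T : ℝ} {F1 : Type*} [NormedAddCommGroup F1]
    (f : ℝ → F1) (p : ℝ≥0∞) (h : ∀ t ∈ Ioc 0 T, f t = 0) :
    eLpNorm f p (volume.restrict (Ioc 0 T)) = 0 := by
  have hae : f =ᵐ[volume.restrict (Ioc 0 T)] 0 :=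
    (ae_restrict_mem measurableSet_Ioc).mono h
  calc eLpNorm f p (volume.restrict (Ioc 0 T))
      = eLpNorm (0 : ℝ → F1) p (volume.restrict (Ioc 0 T)) := eLpNorm_congr_ae hae
    _ = 0 := eLpNorm_zero

end Helpers


section

variable
    {H V H1B L2B GΩ GB : Type}
    [NormedAddCommGroup H] [InnerProductSpace ℝ H] [CompleteSpace H]
    [NormedAddCommGroup V] [InnerProductSpace ℝ V] [CompleteSpace V]
    [NormedAddCommGroup H1B] [InnerProductSpace ℝ H1B] [CompleteSpace H1B]
    [NormedAddCommGroup L2B] [InnerProductSpace ℝ L2B] [CompleteSpace L2B]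
    [NormedAddCommGroup GΩ] [InnerProductSpace ℝ GΩ] [CompleteSpace GΩ]
    [NormedAddCommGroup GB] [InnerProductSpace ℝ GB] [CompleteSpace GB]

/-- `(u^m, w^m, X^m)` is a `C¹` solution of the `m`-th Galerkin system
(equations `(inKm)` of the paper) with initial data the projections of
`(u₀, u_{s0}, X₀)` on the spans of the first `m` basis functions.
Here `ψ` are the `a`-eigenfunctions spanning `V^m`, `χ` the `c`-eigenfunctions
spanning `ℍ^m`, `φ_i(t) = comp t (ψ i)` span `W^m(t)`, and
`(v, z) ∈ K_t^m` iff `v ∈ V^m`, `z ∈ W^m(t)` and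
`c(φ_i(t), v∘X̄(t) − z) = 0` for `i = 1,…,m`. -/
def GalerkinSolves (T : ℝ)
    (jV : V →L[ℝ] H) (ιB : H1B →L[ℝ] L2B) (gradB : H1B →L[ℝ] GB)
    (a : V →L[ℝ] V →L[ℝ] ℝ) (comp : ℝ → V →L[ℝ] H1B)
    (ρf δρ κ : ℝ) (ψ : ℕ → V) (χ : ℕ → H1B)
    (u0 : V) (X0 : H1B) (m : ℕ)
    (um : ℝ → V) (wm Xm : ℝ → H1B) : Prop :=
  -- C¹ regularity on [0,T]
  ContDiffOn ℝ 1 um (Icc 0 T) ∧ ContDiffOn ℝ 1 wm (Icc 0 T) ∧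
  ContDiffOn ℝ 1 Xm (Icc 0 T) ∧
  -- u^m(t) ∈ V^m, X^m(t) ∈ ℍ^m and (u^m(t), w^m(t)) ∈ K_t^m
  (∀ t ∈ Icc 0 T,
    um t ∈ Submodule.span ℝ (Set.range fun i : Fin m => ψ (i : ℕ))) ∧
  (∀ t ∈ Icc 0 T,
    Xm t ∈ Submodule.span ℝ (Set.range fun i : Fin m => χ (i : ℕ))) ∧
  (∀ t ∈ Icc 0 T,
    wm t ∈ Submodule.span ℝ (Set.range fun i : Fin m => comp t (ψ (i : ℕ)))) ∧
  (∀ t ∈ Icc 0 T, ∀ i : Fin m,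
    ⟪comp t (ψ (i : ℕ)), comp t (um t) - wm t⟫ = 0) ∧
  -- first Galerkin equation, for all test pairs (v, z(t)) ∈ K_t^m
  (∀ t ∈ Icc 0 T, ∀ v : V, ∀ z : H1B,
    v ∈ Submodule.span ℝ (Set.range fun i : Fin m => ψ (i : ℕ)) →
    z ∈ Submodule.span ℝ (Set.range fun i : Fin m => comp t (ψ (i : ℕ))) →
    (∀ i : Fin m, ⟪comp t (ψ (i : ℕ)), comp t v - z⟫ = 0) →
      ρf * derivWithin (fun s => ⟪jV (um s), jV v⟫) (Icc 0 T) t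
        + a (um t) v
        + δρ * derivWithin (fun s => ⟪ιB (wm s), ιB z⟫) (Icc 0 T) t
        + κ * ⟪gradB (Xm t), gradB z⟫ = 0) ∧
  -- second Galerkin equation: (∂X^m/∂t, y)_B = (w^m, y)_B for all y ∈ ℍ^m
  (∀ t ∈ Icc 0 T, ∀ y : H1B,
    y ∈ Submodule.span ℝ (Set.range fun i : Fin m => χ (i : ℕ)) →
      derivWithin (fun s => ⟪ιB (Xm s), ιB y⟫) (Icc 0 T) t
        = ⟪ιB (wm t), ιB y⟫) ∧
  -- initial data: u^m(0) is the L²(Ω)-projection of u₀ on V^m,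
  -- w^m(0) = Σ α_{0j} φ_j(0) has the same coefficients as u^m(0),
  -- X^m(0) is the L²(B)-projection of X₀ on ℍ^m
  (∀ i : Fin m, ⟪jV (um 0 - u0), jV (ψ (i : ℕ))⟫ = 0) ∧
  wm 0 = comp 0 (um 0) ∧
  (∀ i : Fin m, ⟪ιB (Xm 0 - X0), ιB (χ (i : ℕ))⟫ = 0)

noncomputable def gkKA2 (Na Nj n0 U W M' T ρf δρ κ c0 volB : ℝ) : ℝ :=
  let sA := Na * U * n0
  let Ebar := ρf/2 * (Nj * U * sA)^2 + δρ/2 * (W * sA)^2 + κ/2 * (c0 * volB)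
  let G := Real.sqrt (2 * Ebar / κ)
  let P := κ * G * W
  let c2 := δρ/4 * M'^2 * U^2 + κ * W^2 + κ/2 * M'^2 * U^2
  let C5 := κ/2 * G^2 + 4 * c2
  4 * (((1/2) * sA^2 + κ * G * W * sA + P^2 + 1) * Real.exp (C5 * T))

lemma galerkin_core
    (T : ℝ) (hT : 0 < T)
    (jV : V →L[ℝ] H) (hjV : Function.Injective jV)
    (gradB : H1B →L[ℝ] GB) (ιB : H1B →L[ℝ] L2B)
    (hc : ∀ μ z : H1B, ⟪μ, z⟫ = ⟪gradB μ, gradB z⟫ + ⟪ιB μ, ιB z⟫)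
    (a : V →L[ℝ] V →L[ℝ] ℝ)
    (hKorn : ∀ v : V, 0 ≤ a v v)
    (comp : ℝ → V →L[ℝ] H1B) (hcomp : ContDiffOn ℝ 1 comp (Icc 0 T))
    (ρf δρ κ : ℝ) (hρf : 0 < ρf) (hδρ : 0 ≤ δρ) (hκ : 0 < κ)
    (ψ : ℕ → V) (lf : ℕ → ℝ)
    (hψeig : ∀ j, ∀ v : V, a (ψ j) v = lf j * ⟪jV (ψ j), jV v⟫)
    (hψortho : ∀ i j, i ≠ j → ⟪jV (ψ i), jV (ψ j)⟫ = 0)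
    (χ : ℕ → H1B) (ls : ℕ → ℝ)
    (hχeig : ∀ r, ∀ μ : H1B, ⟪μ, χ r⟫ = ls r * ⟪ιB (χ r), ιB μ⟫)
    (u0 : V) (X0 : H1B)
    (volB c0 : ℝ) (hvolB : 0 ≤ volB) (hc0 : 0 ≤ c0)
    (hX0 : ‖X0‖ ^ 2 ≤ c0 * volB)
    (U : ℝ) (hU0 : 0 ≤ U) (hU : ∀ v : V, ‖v‖ ≤ U * Real.sqrt (a v v))
    (W : ℝ) (hW0 : 0 ≤ W)
    (hW : ∀ t ∈ Icc 0 T, ∀ v : V, ‖comp t v‖ ≤ W * Real.sqrt (a v v))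
    (M' : ℝ) (hM'0 : 0 ≤ M')
    (hM' : ∀ t ∈ Icc 0 T, ‖derivWithin comp (Icc 0 T) t‖ ≤ M')
    (m : ℕ) (u : ℝ → V) (w X : ℝ → H1B)
    (hsol : GalerkinSolves T jV ιB gradB a comp ρf δρ κ ψ χ u0 X0 m u w X) :
    (∀ t ∈ Icc 0 T,
      (a (u t)) (u t) ≤ gkKA2 ‖a‖ ‖jV‖ ‖u0‖ U W M' T ρf δρ κ c0 volB ∧
      ‖u t‖ ≤ U * Real.sqrt ((a (u t)) (u t)) ∧
      ‖w t‖ ≤ W * Real.sqrt ((a (u t)) (u t)) ∧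
      ‖derivWithin X (Icc 0 T) t‖ ≤ ‖w t‖ ∧
      ‖X t‖ ≤ Real.sqrt (c0 * volB) +
        (W * Real.sqrt (gkKA2 ‖a‖ ‖jV‖ ‖u0‖ U W M' T ρf δρ κ c0 volB)) * T)
    ∧ ((u 0 = 0 ∧ volB = 0) → ∀ t ∈ Icc 0 T,
        u t = 0 ∧ w t = 0 ∧ X t = 0 ∧ derivWithin X (Icc 0 T) t = 0) := by
  obtain ⟨hu, hw, hX, huVm, hXHm, hwWm, hconstr, heq1, heq2, hinitu, hinitw, hinitX⟩ := hsol
  have hUD : UniqueDiffOn ℝ (Icc 0 T) := uniqueDiffOn_Icc hT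
  have h0I : (0:ℝ) ∈ Icc 0 T := ⟨le_rfl, hT.le⟩
  obtain ⟨du, hdu_def⟩ : ∃ f : ℝ → V, f = fun t => derivWithin u (Icc 0 T) t := ⟨_, rfl⟩
  obtain ⟨dw, hdw_def⟩ : ∃ f : ℝ → H1B, f = fun t => derivWithin w (Icc 0 T) t := ⟨_, rfl⟩
  obtain ⟨dX, hdX_def⟩ : ∃ f : ℝ → H1B, f = fun t => derivWithin X (Icc 0 T) t := ⟨_, rfl⟩
  have hdXt : ∀ t, derivWithin X (Icc 0 T) t = dX t := fun t => by rw [hdX_def]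
  have hdu : ∀ t ∈ Icc 0 T, HasDerivWithinAt u (du t) (Icc 0 T) t := by
    intro t ht
    rw [hdu_def]
    exact ((hu.differentiableOn one_ne_zero) t ht).hasDerivWithinAt
  have hdw : ∀ t ∈ Icc 0 T, HasDerivWithinAt w (dw t) (Icc 0 T) t := by
    intro t ht
    rw [hdw_def]
    exact ((hw.differentiableOn one_ne_zero) t ht).hasDerivWithinAt
  have hdX : ∀ t ∈ Icc 0 T, HasDerivWithinAt X (dX t) (Icc 0 T) t := by
    intro t ht
    rw [hdX_def]
    exact ((hX.differentiableOn one_ne_zero) t ht).hasDerivWithinAt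
  have hdcomp : ∀ t ∈ Icc 0 T,
      HasDerivWithinAt comp (derivWithin comp (Icc 0 T) t) (Icc 0 T) t :=
    fun t ht => ((hcomp.differentiableOn one_ne_zero) t ht).hasDerivWithinAt
  -- basic norm facts from hc
  have hιB_le : ∀ μ : H1B, ‖ιB μ‖ ≤ ‖μ‖ := by
    intro μ
    have h1 := hc μ μ
    rw [real_inner_self_eq_norm_sq, real_inner_self_eq_norm_sq,
      real_inner_self_eq_norm_sq] at h1
    nlinarith [norm_nonneg μ, norm_nonneg (ιB μ), norm_nonneg (gradB μ),
      sq_nonneg (‖gradB μ‖)]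
  have hgradB_le : ∀ μ : H1B, ‖gradB μ‖ ≤ ‖μ‖ := by
    intro μ
    have h1 := hc μ μ
    rw [real_inner_self_eq_norm_sq, real_inner_self_eq_norm_sq,
      real_inner_self_eq_norm_sq] at h1
    nlinarith [norm_nonneg μ, norm_nonneg (ιB μ), norm_nonneg (gradB μ),
      sq_nonneg (‖ιB μ‖)]
  -- w t = comp t (u t)
  have hw_eq : ∀ t ∈ Icc 0 T, w t = comp t (u t) := by
    intro t ht
    have hmem1 : comp t (u t) ∈
        Submodule.span ℝ (Set.range fun i : Fin m => comp t (ψ (i : ℕ))) :=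
      aux_map_span (comp t) _ (huVm t ht)
    have hmem : comp t (u t) - w t ∈
        Submodule.span ℝ (Set.range fun i : Fin m => comp t (ψ (i : ℕ))) :=
      Submodule.sub_mem _ hmem1 (hwWm t ht)
    have hz := aux_inner_span_zero (fun i : Fin m => comp t (ψ (i : ℕ)))
      (comp t (u t) - w t) (hconstr t ht) hmem
    have h0 : comp t (u t) - w t = 0 := inner_self_eq_zero.mp hz
    have := sub_eq_zero.mp h0
    exact this.symm
  -- derivatives stay in the finite-dimensional spaces
  have hduVm : ∀ t ∈ Icc 0 T,
      du t ∈ Submodule.span ℝ (Set.range fun i : Fin m => ψ (i : ℕ)) :=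
    fun t ht => aux_deriv_mem _ hT ht huVm (hdu t ht)
  have hdXHm : ∀ t ∈ Icc 0 T,
      dX t ∈ Submodule.span ℝ (Set.range fun i : Fin m => χ (i : ℕ)) :=
    fun t ht => aux_deriv_mem _ hT ht hXHm (hdX t ht)
  -- instantiated first equation
  have heqv : ∀ t ∈ Icc 0 T, ∀ v : V,
      v ∈ Submodule.span ℝ (Set.range fun i : Fin m => ψ (i : ℕ)) →
      ρf * ⟪jV (du t), jV v⟫ + (a (u t)) v + δρ * ⟪ιB (dw t), ιB (comp t v)⟫
        + κ * ⟪gradB (X t), gradB (comp t v)⟫ = 0 := by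
    intro t ht v hv
    have h := heq1 t ht v (comp t v) hv (aux_map_span (comp t) _ hv)
      (fun i => by simp)
    rwa [aux_deriv_inner_const hT jV ht (hdu t ht) (jV v),
      aux_deriv_inner_const hT ιB ht (hdw t ht) (ιB (comp t v))] at h
  -- second equation: L² identities for dX
  have hdX_iB : ∀ t ∈ Icc 0 T, ∀ y : H1B,
      y ∈ Submodule.span ℝ (Set.range fun i : Fin m => χ (i : ℕ)) →
      ⟪ιB (dX t), ιB y⟫ = ⟪ιB (w t), ιB y⟫ := by
    intro t ht y hy
    have h := heq2 t ht y hy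
    rwa [aux_deriv_inner_const hT ιB ht (hdX t ht) (ιB y)] at h
  -- H¹ identities for dX (c-projection property)
  have hdX_inner : ∀ t ∈ Icc 0 T, ∀ y : H1B,
      y ∈ Submodule.span ℝ (Set.range fun i : Fin m => χ (i : ℕ)) →
      ⟪dX t, y⟫ = ⟪w t, y⟫ := by
    intro t ht y hy
    induction hy using Submodule.span_induction with
    | mem x hxm =>
        obtain ⟨i, rfl⟩ := hxm
        calc ⟪dX t, χ (i:ℕ)⟫ = ls (i:ℕ) * ⟪ιB (χ (i:ℕ)), ιB (dX t)⟫ := hχeig _ _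
          _ = ls (i:ℕ) * ⟪ιB (χ (i:ℕ)), ιB (w t)⟫ := by
              have e := hdX_iB t ht _ (Submodule.subset_span ⟨i, rfl⟩)
              have e2 : ⟪ιB (χ (i:ℕ)), ιB (dX t)⟫ = ⟪ιB (χ (i:ℕ)), ιB (w t)⟫ := by
                rw [real_inner_comm, e, real_inner_comm]
              rw [e2]
          _ = ⟪w t, χ (i:ℕ)⟫ := (hχeig _ _).symm
    | zero => simp
    | add x y hx hy ihx ihy => rw [inner_add_right, inner_add_right, ihx, ihy]
    | smul c x hx ih => rw [real_inner_smul_right, real_inner_smul_right, ih]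
  have hdX_norm : ∀ t ∈ Icc 0 T, ‖dX t‖ ≤ ‖w t‖ := by
    intro t ht
    have h1 : ⟪dX t, dX t⟫ = ⟪w t, dX t⟫ := hdX_inner t ht (dX t) (hdXHm t ht)
    rw [real_inner_self_eq_norm_sq] at h1
    have h2 : ⟪w t, dX t⟫ ≤ ‖w t‖ * ‖dX t‖ := real_inner_le_norm _ _
    exact aux_sq_le _ _ (norm_nonneg _) (norm_nonneg _) (by linarith)
  -- energy
  obtain ⟨En, hEn_def⟩ : ∃ f : ℝ → ℝ, f = fun t => ρf/2 * ‖jV (u t)‖^2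
      + δρ/2 * ‖ιB (w t)‖^2 + κ/2 * ‖gradB (X t)‖^2 := ⟨_, rfl⟩
  have hEn_t : ∀ t, En t = ρf/2 * ‖jV (u t)‖^2
      + δρ/2 * ‖ιB (w t)‖^2 + κ/2 * ‖gradB (X t)‖^2 := fun t => by rw [hEn_def]
  have hsqderiv : ∀ {E' : Type} [inst : NormedAddCommGroup E']
      [inst2 : InnerProductSpace ℝ E'], ∀ (f : ℝ → E') (f' : E') (t : ℝ),
      HasDerivWithinAt f f' (Icc 0 T) t →
      HasDerivWithinAt (fun s => ‖f s‖^2) (2 * ⟪f', f t⟫) (Icc 0 T) t := by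
    intro E' _ _ f f' t hf
    have h1 := hf.inner ℝ hf
    have heqf : (fun s => ⟪f s, f s⟫) = fun s => ‖f s‖^2 :=
      funext fun s => real_inner_self_eq_norm_sq _
    rw [heqf] at h1
    convert h1 using 1
    · rfl
    · rfl
    rw [real_inner_comm]
    ring
  have hEn_deriv : ∀ t ∈ Icc 0 T,
      HasDerivWithinAt En (-((a (u t)) (u t))) (Icc 0 T) t := by
    intro t ht
    have h1 := hsqderiv (fun s => jV (u s)) (jV (du t)) t
      (jV.hasFDerivAt.comp_hasDerivWithinAt t (hdu t ht))
    have h2 := hsqderiv (fun s => ιB (w s)) (ιB (dw t)) t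
      (ιB.hasFDerivAt.comp_hasDerivWithinAt t (hdw t ht))
    have h3 := hsqderiv (fun s => gradB (X s)) (gradB (dX t)) t
      (gradB.hasFDerivAt.comp_hasDerivWithinAt t (hdX t ht))
    have hEd : HasDerivWithinAt (fun t => ρf/2 * ‖jV (u t)‖^2
        + δρ/2 * ‖ιB (w t)‖^2 + κ/2 * ‖gradB (X t)‖^2)
        (ρf/2 * (2 * ⟪jV (du t), jV (u t)⟫) + δρ/2 * (2 * ⟪ιB (dw t), ιB (w t)⟫)
          + κ/2 * (2 * ⟪gradB (dX t), gradB (X t)⟫)) (Icc 0 T) t :=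
      ((h1.const_mul _).add (h2.const_mul _)).add (h3.const_mul _)
    have he := heqv t ht (u t) (huVm t ht)
    rw [← hw_eq t ht] at he
    have hkey : ⟪gradB (dX t), gradB (X t)⟫ = ⟪gradB (X t), gradB (w t)⟫ := by
      have e1 : ⟪dX t, X t⟫ = ⟪w t, X t⟫ := hdX_inner t ht (X t) (hXHm t ht)
      have e2 : ⟪ιB (dX t), ιB (X t)⟫ = ⟪ιB (w t), ιB (X t)⟫ :=
        hdX_iB t ht (X t) (hXHm t ht)
      have e3 := hc (dX t) (X t)
      have e4 := hc (w t) (X t)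
      have e5 : ⟪gradB (dX t), gradB (X t)⟫ = ⟪gradB (w t), gradB (X t)⟫ := by
        linarith
      rw [e5, real_inner_comm]
    have hval : ρf/2 * (2 * ⟪jV (du t), jV (u t)⟫) + δρ/2 * (2 * ⟪ιB (dw t), ιB (w t)⟫)
        + κ/2 * (2 * ⟪gradB (dX t), gradB (X t)⟫) = -((a (u t)) (u t)) := by
      rw [hkey]
      linarith
    rw [hval] at hEd
    rw [hEn_def]
    exact hEd
  have hEn_mono : ∀ t ∈ Icc 0 T, En t ≤ En 0 := by
    intro t ht
    have hgr := aux_gronwall hT le_rfl En (fun t => -((a (u t)) (u t))) hEn_deriv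
      (fun s hs => by
        have := hKorn (u s)
        simp only [zero_mul]
        linarith) t ht
    simpa using hgr
  -- the H¹ energy A
  obtain ⟨A, hA_def⟩ : ∃ f : ℝ → ℝ, f = fun t => (a (u t)) (u t) := ⟨_, rfl⟩
  have hA_t : ∀ t, A t = (a (u t)) (u t) := fun t => by rw [hA_def]
  have hA_nonneg : ∀ t, 0 ≤ A t := fun t => by rw [hA_t]; exact hKorn (u t)
  have hw_normA : ∀ t ∈ Icc 0 T, ‖w t‖ ≤ W * Real.sqrt (A t) := by
    intro t ht
    rw [hw_eq t ht, hA_t]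
    exact hW t ht (u t)
  have hu_normA : ∀ t, ‖u t‖ ≤ U * Real.sqrt (A t) := by
    intro t
    rw [hA_t]
    exact hU (u t)
  -- bound for A 0
  have horto : ∀ x ∈ Submodule.span ℝ (Set.range fun i : Fin m => ψ (i : ℕ)),
      (a x) (u 0 - u0) = 0 := by
    intro x hx
    induction hx using Submodule.span_induction with
    | mem x hxm =>
        obtain ⟨i, rfl⟩ := hxm
        rw [hψeig]
        have : ⟪jV (ψ (i:ℕ)), jV (u 0 - u0)⟫ = 0 := by
          rw [real_inner_comm]
          exact hinitu i
        rw [this, mul_zero]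
    | zero => rw [map_zero]; rfl
    | add x y hx hy ihx ihy =>
        rw [map_add]
        simp only [ContinuousLinearMap.add_apply]
        rw [ihx, ihy]; ring
    | smul c x hx ih =>
        rw [_root_.map_smul]
        simp only [ContinuousLinearMap.coe_smul', Pi.smul_apply, smul_eq_mul]
        rw [ih]; ring
  have hA0 : A 0 ≤ (‖a‖ * U * ‖u0‖)^2 := by
    have h1 : A 0 = (a (u 0)) u0 := by
      have h2 := horto (u 0) (huVm 0 h0I)
      rw [map_sub] at h2
      rw [hA_t]
      linarith
    have h3 : (a (u 0)) u0 ≤ ‖a‖ * ‖u 0‖ * ‖u0‖ := by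
      calc (a (u 0)) u0 ≤ |(a (u 0)) u0| := le_abs_self _
        _ = ‖(a (u 0)) u0‖ := rfl
        _ ≤ ‖a (u 0)‖ * ‖u0‖ := (a (u 0)).le_opNorm u0
        _ ≤ ‖a‖ * ‖u 0‖ * ‖u0‖ := by
            have := a.le_opNorm (u 0)
            have h4 : (0:ℝ) ≤ ‖u0‖ := norm_nonneg _
            nlinarith [(a (u 0)).opNorm_nonneg, a.opNorm_nonneg]
    have h4 : ‖u 0‖ ≤ U * Real.sqrt (A 0) := hu_normA 0
    have h6 : (0:ℝ) ≤ ‖a‖ := a.opNorm_nonneg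
    have h7 : (0:ℝ) ≤ ‖u0‖ := norm_nonneg _
    have h5 : A 0 ≤ (‖a‖ * U * ‖u0‖) * Real.sqrt (A 0) := by
      calc A 0 = (a (u 0)) u0 := h1
        _ ≤ ‖a‖ * ‖u 0‖ * ‖u0‖ := h3
        _ ≤ ‖a‖ * (U * Real.sqrt (A 0)) * ‖u0‖ :=
            mul_le_mul_of_nonneg_right (mul_le_mul_of_nonneg_left h4 h6) h7
        _ = (‖a‖ * U * ‖u0‖) * Real.sqrt (A 0) := by ring
    have hs := Real.sq_sqrt (hA_nonneg 0)
    have hsn := Real.sqrt_nonneg (A 0)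
    have hcn : (0:ℝ) ≤ ‖a‖ * U * ‖u0‖ := by positivity
    have h8 : Real.sqrt (A 0) ≤ ‖a‖ * U * ‖u0‖ :=
      aux_sq_le _ _ hsn hcn (by nlinarith)
    nlinarith
  -- symmetry of a on the span
  have hsymm : ∀ x ∈ Submodule.span ℝ (Set.range fun i : Fin m => ψ (i : ℕ)),
      ∀ y ∈ Submodule.span ℝ (Set.range fun i : Fin m => ψ (i : ℕ)),
      (a x) y = (a y) x := by
    have base : ∀ i j : ℕ, (a (ψ i)) (ψ j) = (a (ψ j)) (ψ i) := by
      intro i j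
      by_cases h : i = j
      · rw [h]
      · rw [hψeig, hψeig, hψortho i j h, hψortho j i (Ne.symm h)]
        ring
    intro x hx
    induction hx using Submodule.span_induction with
    | mem x hxm =>
        obtain ⟨i, rfl⟩ := hxm
        intro y hy
        induction hy using Submodule.span_induction with
        | mem y hym => obtain ⟨j, rfl⟩ := hym; exact base _ _
        | zero => rw [map_zero]; simp
        | add y z hy hz ihy ihz =>
            rw [map_add]
            simp only [ContinuousLinearMap.add_apply, map_add]
            rw [ihy, ihz]
        | smul c y hy ih =>
            rw [_root_.map_smul]
            simp only [ContinuousLinearMap.coe_smul', Pi.smul_apply, smul_eq_mul,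
              _root_.map_smul]
            rw [ih]
    | zero => intro y hy; rw [map_zero]; simp
    | add x z hx hz ihx ihz =>
        intro y hy
        rw [map_add]
        simp only [ContinuousLinearMap.add_apply, map_add]
        rw [ihx y hy, ihz y hy]
    | smul c x hx ih =>
        intro y hy
        rw [_root_.map_smul]
        simp only [ContinuousLinearMap.coe_smul', Pi.smul_apply, smul_eq_mul,
          _root_.map_smul]
        rw [ih y hy]
  -- constants
  obtain ⟨sA, hsA_def⟩ : ∃ x : ℝ, x = ‖a‖ * U * ‖u0‖ := ⟨_, rfl⟩
  obtain ⟨Ebar, hEbar_def⟩ : ∃ x : ℝ,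
    x = ρf/2 * (‖jV‖ * U * sA)^2 + δρ/2 * (W * sA)^2 + κ/2 * (c0 * volB) := ⟨_, rfl⟩
  obtain ⟨G, hG_def⟩ : ∃ x : ℝ, x = Real.sqrt (2 * Ebar / κ) := ⟨_, rfl⟩
  obtain ⟨P, hP_def⟩ : ∃ x : ℝ, x = κ * G * W := ⟨_, rfl⟩
  obtain ⟨c2, hc2_def⟩ : ∃ x : ℝ,
    x = δρ/4 * M'^2 * U^2 + κ * W^2 + κ/2 * M'^2 * U^2 := ⟨_, rfl⟩
  obtain ⟨C5, hC5_def⟩ : ∃ x : ℝ, x = κ/2 * G^2 + 4 * c2 := ⟨_, rfl⟩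
  obtain ⟨KA2, hKA2_def⟩ : ∃ x : ℝ,
    x = 4 * (((1/2) * sA^2 + κ * G * W * sA + P^2 + 1) * Real.exp (C5 * T)) := ⟨_, rfl⟩
  have hsA0 : 0 ≤ sA := by
    rw [hsA_def]
    have := a.opNorm_nonneg
    have := norm_nonneg u0
    positivity
  have hA0' : A 0 ≤ sA^2 := by rw [hsA_def]; exact hA0
  have hsqrtA0 : Real.sqrt (A 0) ≤ sA := by
    rw [← Real.sqrt_sq hsA0]
    exact Real.sqrt_le_sqrt hA0'
  have hEbar0 : 0 ≤ Ebar := by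
    rw [hEbar_def]
    have t1 : 0 ≤ ρf/2 * (‖jV‖ * U * sA)^2 := mul_nonneg (by linarith) (sq_nonneg _)
    have t2 : 0 ≤ δρ/2 * (W * sA)^2 := mul_nonneg (by linarith) (sq_nonneg _)
    have t3 : 0 ≤ κ/2 * (c0 * volB) := mul_nonneg (by linarith) (mul_nonneg hc0 hvolB)
    linarith
  have hG0 : 0 ≤ G := by rw [hG_def]; exact Real.sqrt_nonneg _
  have hG2 : G^2 = 2 * Ebar / κ := by
    rw [hG_def]
    exact Real.sq_sqrt (div_nonneg (by linarith) hκ.le)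
  have hc20 : 0 ≤ c2 := by
    rw [hc2_def]
    have t1 : 0 ≤ δρ/4 * M'^2 * U^2 :=
      mul_nonneg (mul_nonneg (by linarith) (sq_nonneg _)) (sq_nonneg _)
    have t2 : 0 ≤ κ * W^2 := mul_nonneg hκ.le (sq_nonneg _)
    have t3 : 0 ≤ κ/2 * M'^2 * U^2 :=
      mul_nonneg (mul_nonneg (by linarith) (sq_nonneg _)) (sq_nonneg _)
    linarith
  have hC50 : 0 ≤ C5 := by
    rw [hC5_def]
    have t1 : 0 ≤ κ/2 * G^2 := mul_nonneg (by linarith) (sq_nonneg _)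
    linarith
  -- E(0) ≤ Ebar
  have hw0b : ‖ιB (w 0)‖ ≤ W * sA := by
    calc ‖ιB (w 0)‖ ≤ ‖w 0‖ := hιB_le _
      _ ≤ W * Real.sqrt (A 0) := hw_normA 0 h0I
      _ ≤ W * sA := mul_le_mul_of_nonneg_left hsqrtA0 hW0
  have hjV0 : ‖jV (u 0)‖ ≤ ‖jV‖ * U * sA := by
    calc ‖jV (u 0)‖ ≤ ‖jV‖ * ‖u 0‖ := jV.le_opNorm _
      _ ≤ ‖jV‖ * (U * Real.sqrt (A 0)) :=
          mul_le_mul_of_nonneg_left (hu_normA 0) jV.opNorm_nonneg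
      _ ≤ ‖jV‖ * (U * sA) := mul_le_mul_of_nonneg_left
          (mul_le_mul_of_nonneg_left hsqrtA0 hU0) jV.opNorm_nonneg
      _ = ‖jV‖ * U * sA := by ring
  have hX0b : ‖X 0‖ ≤ Real.sqrt (c0 * volB) := by
    have hXin : ∀ y ∈ Submodule.span ℝ (Set.range fun i : Fin m => χ (i : ℕ)),
        ⟪X 0 - X0, y⟫ = 0 := by
      intro y hy
      induction hy using Submodule.span_induction with
      | mem x hxm =>
          obtain ⟨i, rfl⟩ := hxm
          rw [hχeig]
          have e2 : ⟪ιB (χ (i:ℕ)), ιB (X 0 - X0)⟫ = 0 := by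
            rw [real_inner_comm]
            exact hinitX i
          rw [e2, mul_zero]
      | zero => simp
      | add x y hx hy ihx ihy => rw [inner_add_right, ihx, ihy]; ring
      | smul c x hx ih => rw [real_inner_smul_right, ih]; ring
    have h1 : ⟪X 0 - X0, X 0⟫ = 0 := hXin (X 0) (hXHm 0 h0I)
    have h2 : ‖X 0‖^2 ≤ ‖X0‖ * ‖X 0‖ := by
      have h3 : ⟪X0, X 0⟫ ≤ ‖X0‖ * ‖X 0‖ := real_inner_le_norm _ _
      have h4 : ⟪X 0, X 0⟫ - ⟪X0, X 0⟫ = 0 := by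
        rw [← inner_sub_left]
        exact h1
      rw [real_inner_self_eq_norm_sq] at h4
      linarith
    have h5 : ‖X 0‖ ≤ ‖X0‖ := aux_sq_le _ _ (norm_nonneg _) (norm_nonneg _) h2
    calc ‖X 0‖ ≤ ‖X0‖ := h5
      _ = Real.sqrt (‖X0‖^2) := (Real.sqrt_sq (norm_nonneg _)).symm
      _ ≤ Real.sqrt (c0 * volB) := Real.sqrt_le_sqrt hX0
  have hE0 : En 0 ≤ Ebar := by
    have e1 : ‖jV (u 0)‖^2 ≤ (‖jV‖ * U * sA)^2 :=
      aux_pow2_mono _ _ (norm_nonneg _) hjV0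
    have e2 : ‖ιB (w 0)‖^2 ≤ (W * sA)^2 :=
      aux_pow2_mono _ _ (norm_nonneg _) hw0b
    have e3 : ‖gradB (X 0)‖^2 ≤ c0 * volB := by
      have g1 : ‖gradB (X 0)‖ ≤ Real.sqrt (c0*volB) := (hgradB_le _).trans hX0b
      have g2 := Real.sq_sqrt (mul_nonneg hc0 hvolB)
      have := aux_pow2_mono _ _ (norm_nonneg _) g1
      linarith only [this, g2]
    have f1 := mul_le_mul_of_nonneg_left e1 (by linarith : (0:ℝ) ≤ ρf/2)
    have f2 := mul_le_mul_of_nonneg_left e2 (by linarith : (0:ℝ) ≤ δρ/2)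
    have f3 := mul_le_mul_of_nonneg_left e3 (by linarith : (0:ℝ) ≤ κ/2)
    rw [hEn_t, hEbar_def]
    linarith only [f1, f2, f3]
  have hgradX : ∀ t ∈ Icc 0 T, ‖gradB (X t)‖ ≤ G := by
    intro t ht
    have h1 : κ/2 * ‖gradB (X t)‖^2 ≤ En t := by
      rw [hEn_t]
      have q1 : 0 ≤ ρf/2 * ‖jV (u t)‖^2 := mul_nonneg (by linarith only [hρf]) (sq_nonneg _)
      have q2 : 0 ≤ δρ/2 * ‖ιB (w t)‖^2 := mul_nonneg (by linarith only [hδρ]) (sq_nonneg _)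
      linarith only [q1, q2]
    have h2 : En t ≤ Ebar := (hEn_mono t ht).trans hE0
    have h3 : ‖gradB (X t)‖^2 ≤ G^2 := by
      rw [hG2, le_div_iff₀ hκ]
      linarith only [h1, h2]
    calc ‖gradB (X t)‖ = Real.sqrt (‖gradB (X t)‖^2) :=
          (Real.sqrt_sq (norm_nonneg _)).symm
      _ ≤ Real.sqrt (G^2) := Real.sqrt_le_sqrt h3
      _ = G := Real.sqrt_sq hG0
  -- the functional Θ and its derivative
  obtain ⟨Th, hTh_def⟩ : ∃ f : ℝ → ℝ,
    f = fun t => (1/2) * A t + κ * ⟪gradB (X t), gradB (w t)⟫ + P^2 := ⟨_, rfl⟩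
  have hTh_t : ∀ t, Th t = (1/2) * A t + κ * ⟪gradB (X t), gradB (w t)⟫ + P^2 :=
    fun t => by rw [hTh_def]
  obtain ⟨dTh, hdTh_def⟩ : ∃ f : ℝ → ℝ,
    f = fun t => (1/2) * ((a (du t)) (u t) + (a (u t)) (du t))
      + κ * (⟪gradB (X t), gradB (dw t)⟫ + ⟪gradB (dX t), gradB (w t)⟫) := ⟨_, rfl⟩
  have hdTh_t : ∀ t, dTh t = (1/2) * ((a (du t)) (u t) + (a (u t)) (du t))
      + κ * (⟪gradB (X t), gradB (dw t)⟫ + ⟪gradB (dX t), gradB (w t)⟫) :=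
    fun t => by rw [hdTh_def]
  have hTh_deriv : ∀ t ∈ Icc 0 T, HasDerivWithinAt Th (dTh t) (Icc 0 T) t := by
    intro t ht
    have hA' : HasDerivWithinAt A ((a (du t)) (u t) + (a (u t)) (du t)) (Icc 0 T) t := by
      have h1 : HasDerivWithinAt (fun s => a (u s)) (a (du t)) (Icc 0 T) t :=
        a.hasFDerivAt.comp_hasDerivWithinAt t (hdu t ht)
      have h2 := h1.clm_apply (hdu t ht)
      rw [hA_def]
      exact h2
    have hinner : HasDerivWithinAt (fun s => ⟪gradB (X s), gradB (w s)⟫)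
        (⟪gradB (X t), gradB (dw t)⟫ + ⟪gradB (dX t), gradB (w t)⟫) (Icc 0 T) t :=
      (gradB.hasFDerivAt.comp_hasDerivWithinAt t (hdX t ht)).inner ℝ
        (gradB.hasFDerivAt.comp_hasDerivWithinAt t (hdw t ht))
    rw [hTh_def, hdTh_t]
    exact ((hA'.const_mul _).add (hinner.const_mul _)).add_const _
  -- Θ dominates A/4
  have hTh_ge : ∀ t ∈ Icc 0 T, A t ≤ 4 * Th t := by
    intro t ht
    have h1 : -(G * (W * Real.sqrt (A t))) ≤ ⟪gradB (X t), gradB (w t)⟫ := by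
      have h2 : |⟪gradB (X t), gradB (w t)⟫| ≤ ‖gradB (X t)‖ * ‖gradB (w t)‖ :=
        abs_real_inner_le_norm _ _
      have h3 : ‖gradB (w t)‖ ≤ W * Real.sqrt (A t) :=
        (hgradB_le _).trans (hw_normA t ht)
      have h4 := hgradX t ht
      have h5 := (abs_le.mp h2).1
      have h6 : ‖gradB (X t)‖ * ‖gradB (w t)‖ ≤ G * (W * Real.sqrt (A t)) :=
        mul_le_mul h4 h3 (norm_nonneg _) hG0
      linarith only [h5, h6]
    rw [hTh_t]
    exact aux_thge _ _ _ _ _ _ (hA_nonneg t) hκ.le hP_def h1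
  have hTh_nonneg : ∀ t ∈ Icc 0 T, 0 ≤ Th t := by
    intro t ht
    have h1 := hTh_ge t ht
    have h2 := hA_nonneg t
    linarith only [h1, h2]
  -- the key differential inequality
  have hstep : ∀ t ∈ Icc 0 T, dTh t ≤ C5 * (Th t + 1) := by
    intro t ht
    have he := heqv t ht (du t) (hduVm t ht)
    have hsy : (a (du t)) (u t) = (a (u t)) (du t) :=
      hsymm _ (hduVm t ht) _ (huVm t ht)
    have hdw_eq : dw t = (derivWithin comp (Icc 0 T) t) (u t) + comp t (du t) := by
      have h1 : HasDerivWithinAt (fun s => (comp s) (u s))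
          ((derivWithin comp (Icc 0 T) t) (u t) + (comp t) (du t)) (Icc 0 T) t :=
        (hdcomp t ht).clm_apply (hdu t ht)
      have h2 : HasDerivWithinAt w
          ((derivWithin comp (Icc 0 T) t) (u t) + (comp t) (du t)) (Icc 0 T) t :=
        h1.congr (fun s hs => hw_eq s hs) (hw_eq t ht)
      rw [hdw_def]
      exact h2.derivWithin (hUD t ht)
    obtain ⟨q, hq_def⟩ : ∃ x : H1B, x = comp t (du t) := ⟨_, rfl⟩
    obtain ⟨r, hr_def⟩ : ∃ x : H1B, x = (derivWithin comp (Icc 0 T) t) (u t) := ⟨_, rfl⟩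
    have hrq : dw t = r + q := by rw [hr_def, hq_def]; exact hdw_eq
    have hrb : ‖r‖ ≤ M' * (U * Real.sqrt (A t)) := by
      rw [hr_def]
      calc ‖(derivWithin comp (Icc 0 T) t) (u t)‖
          ≤ ‖derivWithin comp (Icc 0 T) t‖ * ‖u t‖ :=
            (derivWithin comp (Icc 0 T) t).le_opNorm _
        _ ≤ M' * (U * Real.sqrt (A t)) :=
            mul_le_mul (hM' t ht) (hu_normA t) (norm_nonneg _) hM'0
    have he2 : ρf * ⟪jV (du t), jV (du t)⟫ + (a (u t)) (du t)
        + δρ * (⟪ιB r, ιB q⟫ + ⟪ιB q, ιB q⟫) + κ * ⟪gradB (X t), gradB q⟫ = 0 := by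
      have hidw : ιB (dw t) = ιB r + ιB q := by rw [hrq, map_add]
      rw [← hq_def] at he
      rw [hidw, inner_add_left] at he
      exact he
    have heval : dTh t = -(ρf * ⟪jV (du t), jV (du t)⟫) - δρ * ⟪ιB r, ιB q⟫
        - δρ * ⟪ιB q, ιB q⟫ + κ * ⟪gradB (X t), gradB r⟫
        + κ * ⟪gradB (dX t), gradB (w t)⟫ := by
      have hgdw : gradB (dw t) = gradB r + gradB q := by rw [hrq, map_add]
      rw [hdTh_t, hsy, hgdw, inner_add_right]
      linarith only [he2]
    have hb1 : 0 ≤ ρf * ⟪jV (du t), jV (du t)⟫ :=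
      mul_nonneg hρf.le real_inner_self_nonneg
    have hb2 : -(δρ * ⟪ιB r, ιB q⟫) - δρ * ⟪ιB q, ιB q⟫
        ≤ δρ/4 * (M' * (U * Real.sqrt (A t)))^2 := by
      have h1 : |⟪ιB r, ιB q⟫| ≤ ‖ιB r‖ * ‖ιB q‖ := abs_real_inner_le_norm _ _
      have h2 : ⟪ιB q, ιB q⟫ = ‖ιB q‖^2 := real_inner_self_eq_norm_sq _
      have h3 : ‖ιB r‖ ≤ M' * (U * Real.sqrt (A t)) := (hιB_le r).trans hrb
      have h5 := (abs_le.mp h1).1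
      have h6 := aux_b2 δρ (⟪ιB r, ιB q⟫) (‖ιB q‖) (‖ιB r‖)
        (M' * (U * Real.sqrt (A t))) hδρ h5 (norm_nonneg _) (norm_nonneg _) h3
      rw [h2]
      linarith only [h6]
    have hb3 : κ * ⟪gradB (X t), gradB r⟫
        ≤ κ/2 * G^2 + κ/2 * (M' * (U * Real.sqrt (A t)))^2 := by
      have h1 : ⟪gradB (X t), gradB r⟫ ≤ ‖gradB (X t)‖ * ‖gradB r‖ :=
        real_inner_le_norm _ _
      have h3 : ‖gradB r‖ ≤ M' * (U * Real.sqrt (A t)) := (hgradB_le r).trans hrb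
      have h4 : ⟪gradB (X t), gradB r⟫ ≤ G * (M' * (U * Real.sqrt (A t))) :=
        h1.trans (mul_le_mul (hgradX t ht) h3 (norm_nonneg _) hG0)
      exact aux_b3 _ _ _ _ hκ.le h4
    have hb4 : κ * ⟪gradB (dX t), gradB (w t)⟫ ≤ κ * (W * Real.sqrt (A t))^2 := by
      have h1 : ⟪gradB (dX t), gradB (w t)⟫ ≤ ‖gradB (dX t)‖ * ‖gradB (w t)‖ :=
        real_inner_le_norm _ _
      have h2 : ‖gradB (dX t)‖ ≤ W * Real.sqrt (A t) :=
        (hgradB_le _).trans ((hdX_norm t ht).trans (hw_normA t ht))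
      have h3 : ‖gradB (w t)‖ ≤ W * Real.sqrt (A t) :=
        (hgradB_le _).trans (hw_normA t ht)
      have h4 : ⟪gradB (dX t), gradB (w t)⟫
          ≤ (W * Real.sqrt (A t)) * (W * Real.sqrt (A t)) :=
        h1.trans (mul_le_mul h2 h3 (norm_nonneg _)
          (mul_nonneg hW0 (Real.sqrt_nonneg _)))
      exact aux_b4 _ _ _ hκ.le h4
    have hsqA := Real.sq_sqrt (hA_nonneg t)
    have hfinal : dTh t ≤ κ/2 * G^2 + c2 * A t := by
      rw [heval, hc2_def]
      have e1 : (M' * (U * Real.sqrt (A t)))^2 = M'^2 * U^2 * A t := by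
        rw [mul_pow, mul_pow, hsqA]
        ring
      have e2 : (W * Real.sqrt (A t))^2 = W^2 * A t := by
        rw [mul_pow, hsqA]
      rw [e1] at hb2 hb3
      rw [e2] at hb4
      linarith only [hb1, hb2, hb3, hb4]
    have h4Th := hTh_ge t ht
    have hThn := hTh_nonneg t ht
    rw [hC5_def]
    have e3 : c2 * A t ≤ c2 * (4 * Th t) := mul_le_mul_of_nonneg_left h4Th hc20
    have e4 : 0 ≤ κ/2 * G^2 := mul_nonneg (by linarith only [hκ]) (sq_nonneg _)
    exact aux_c5step _ _ _ _ _ hfinal e3 e4 hc20 hThn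
  -- Gronwall
  have hgr := aux_gronwall hT hC50 (fun t => Th t + 1) dTh
    (fun t ht => (hTh_deriv t ht).add_const 1)
    (fun t ht => by simpa using hstep t ht)
  have hTh0b : Th 0 ≤ (1/2) * sA^2 + κ * G * W * sA + P^2 := by
    rw [hTh_t]
    have g3 : ‖gradB (w 0)‖ ≤ W * sA := (hgradB_le _).trans
      ((hw_normA 0 h0I).trans (mul_le_mul_of_nonneg_left hsqrtA0 hW0))
    have g1 : ⟪gradB (X 0), gradB (w 0)⟫ ≤ G * (W * sA) :=
      (real_inner_le_norm _ _).trans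
        (mul_le_mul (hgradX 0 h0I) g3 (norm_nonneg _) hG0)
    have g2 : κ * ⟪gradB (X 0), gradB (w 0)⟫ ≤ κ * (G * (W * sA)) :=
      mul_le_mul_of_nonneg_left g1 hκ.le
    have g4 : κ * (G * (W * sA)) = κ * G * W * sA := by ring
    have g5 : (1/2) * A 0 ≤ (1/2) * sA^2 := by linarith only [hA0']
    linarith only [g2, g5, g4.le]
  have hA_KA2 : ∀ t ∈ Icc 0 T, A t ≤ KA2 := by
    intro t ht
    have h1 : Th t + 1 ≤ (Th 0 + 1) * Real.exp (C5 * t) := by simpa using hgr t ht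
    have h2 := hTh_ge t ht
    have hexp : Real.exp (C5 * t) ≤ Real.exp (C5 * T) :=
      Real.exp_le_exp.mpr (mul_le_mul_of_nonneg_left ht.2 hC50)
    have hTh01 : 0 ≤ Th 0 + 1 := by
      have h3 := hTh_nonneg 0 h0I
      linarith only [h3]
    have e1 : Th 0 + 1 ≤ (1/2) * sA^2 + κ * G * W * sA + P^2 + 1 := by
      linarith only [hTh0b]
    have e2 : (Th 0 + 1) * Real.exp (C5 * t)
        ≤ ((1/2) * sA^2 + κ * G * W * sA + P^2 + 1) * Real.exp (C5 * T) :=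
      mul_le_mul e1 hexp (Real.exp_pos _).le (by linarith only [hTh01, e1])
    rw [hKA2_def]
    linarith only [h1, h2, e2]
  have hsqrtKA : ∀ t ∈ Icc 0 T, Real.sqrt (A t) ≤ Real.sqrt KA2 :=
    fun t ht => Real.sqrt_le_sqrt (hA_KA2 t ht)
  -- X bound
  have hdX_Kw : ∀ s ∈ Icc 0 T, ‖dX s‖ ≤ W * Real.sqrt KA2 := by
    intro s hs
    calc ‖dX s‖ ≤ ‖w s‖ := hdX_norm s hs
      _ ≤ W * Real.sqrt (A s) := hw_normA s hs
      _ ≤ W * Real.sqrt KA2 := mul_le_mul_of_nonneg_left (hsqrtKA s hs) hW0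
  have hXb : ∀ t ∈ Icc 0 T,
      ‖X t‖ ≤ Real.sqrt (c0 * volB) + (W * Real.sqrt KA2) * T := by
    intro t ht
    have h1 := Convex.norm_image_sub_le_of_norm_hasDerivWithin_le
      (f := X) (f' := dX) hdX hdX_Kw (convex_Icc 0 T) h0I ht
    have h2 : ‖t - 0‖ ≤ T := by
      rw [sub_zero, Real.norm_eq_abs, abs_of_nonneg ht.1]
      exact ht.2
    have h3 : ‖X t‖ ≤ ‖X 0‖ + ‖X t - X 0‖ := by
      have h4 := norm_add_le (X 0) (X t - X 0)
      simpa using h4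
    have h5 : (W * Real.sqrt KA2) * ‖t - 0‖ ≤ (W * Real.sqrt KA2) * T :=
      mul_le_mul_of_nonneg_left h2 (mul_nonneg hW0 (Real.sqrt_nonneg _))
    linarith only [h1, h3, h5, hX0b]
  -- zero case
  have hzero : (u 0 = 0 ∧ volB = 0) → ∀ t ∈ Icc 0 T,
      u t = 0 ∧ w t = 0 ∧ X t = 0 ∧ dX t = 0 := by
    rintro ⟨hu00, hvol0⟩
    have hw00 : w 0 = 0 := by rw [hinitw, hu00, map_zero]
    have hXz0 : X 0 = 0 := by
      have h1 : ‖X 0‖ ≤ 0 := by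
        have h2 := hX0b
        rw [hvol0, mul_zero, Real.sqrt_zero] at h2
        exact h2
      exact norm_le_zero_iff.mp h1
    have hE00 : En 0 = 0 := by
      rw [hEn_t, hu00, hw00, hXz0]
      simp
    have huz : ∀ s ∈ Icc 0 T, u s = 0 := by
      intro s hs
      have h1 := hEn_mono s hs
      rw [hE00] at h1
      have h2 : ρf/2 * ‖jV (u s)‖^2 ≤ En s := by
        rw [hEn_t]
        have q1 : 0 ≤ δρ/2 * ‖ιB (w s)‖^2 :=
          mul_nonneg (by linarith only [hδρ]) (sq_nonneg _)
        have q2 : 0 ≤ κ/2 * ‖gradB (X s)‖^2 :=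
          mul_nonneg (by linarith only [hκ]) (sq_nonneg _)
        linarith only [q1, q2]
      have h3 : ‖jV (u s)‖ = 0 :=
        aux_zero_of_sq ρf _ hρf (by linarith only [h1, h2])
      have h4 : jV (u s) = 0 := norm_eq_zero.mp h3
      exact hjV (by rw [h4, map_zero])
    have hwz : ∀ s ∈ Icc 0 T, w s = 0 := by
      intro s hs
      rw [hw_eq s hs, huz s hs, map_zero]
    have hdXz : ∀ s ∈ Icc 0 T, dX s = 0 := by
      intro s hs
      have h1 := hdX_norm s hs
      rw [hwz s hs] at h1
      simp only [norm_zero] at h1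
      exact norm_le_zero_iff.mp h1
    have hXz : ∀ s ∈ Icc 0 T, X s = 0 := by
      intro s hs
      have h1 := Convex.norm_image_sub_le_of_norm_hasDerivWithin_le
        (C := 0) (f := X) (f' := dX) hdX
        (fun r hr => by rw [hdXz r hr]; simp) (convex_Icc 0 T) h0I hs
      have h2 : ‖X s - X 0‖ ≤ 0 := by
        rw [zero_mul] at h1
        exact h1
      have h3 : X s - X 0 = 0 := norm_le_zero_iff.mp h2
      rw [sub_eq_zero] at h3
      rw [h3, hXz0]
    exact fun t ht => ⟨huz t ht, hwz t ht, hXz t ht, hdXz t ht⟩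
  -- final assembly
  have hKA2_eq : gkKA2 ‖a‖ ‖jV‖ ‖u0‖ U W M' T ρf δρ κ c0 volB = KA2 := by
    rw [hKA2_def, hC5_def, hc2_def, hP_def, hG_def, hEbar_def, hsA_def]
    rfl
  constructor
  · intro t ht
    refine ⟨?_, ?_, ?_, ?_, ?_⟩
    · rw [hKA2_eq, ← hA_t]
      exact hA_KA2 t ht
    · have h := hu_normA t
      rw [hA_t] at h
      exact h
    · have h := hw_normA t ht
      rw [hA_t] at h
      exact h
    · rw [hdXt]
      exact hdX_norm t ht
    · rw [hKA2_eq]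
      exact hXb t ht
  · intro hz t ht
    obtain ⟨e1, e2, e3, e4⟩ := hzero hz t ht
    exact ⟨e1, e2, e3, by rw [hdXt]; exact e4⟩




theorem galerkin_a_priori_estimates
    (T : ℝ) (hT : 0 < T)
    (jV : V →L[ℝ] H) (hjV : Function.Injective jV)
    (gradΩ : V →L[ℝ] GΩ) (gradB : H1B →L[ℝ] GB) (ιB : H1B →L[ℝ] L2B)
    (hιB : Function.Injective ιB)
    (hc : ∀ μ z : H1B, ⟪μ, z⟫ = ⟪gradB μ, gradB z⟫ + ⟪ιB μ, ιB z⟫)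
    (a : V →L[ℝ] V →L[ℝ] ℝ) (k : ℝ) (hk : 0 < k)
    (hKorn : ∀ v : V, k * ‖gradΩ v‖ ^ 2 ≤ a v v)
    -- the H¹₀(Ω)-norm is equivalent to the L² norm of the gradient
    (CP : ℝ) (hCP : ∀ v : V, ‖v‖ ≤ CP * ‖gradΩ v‖)
    (comp : ℝ → V →L[ℝ] H1B)
    (hcomp : ContDiffOn ℝ 1 comp (Icc 0 T))
    -- composition with X̄(t) is bounded from the gradient norm on Ω to the
    -- H¹(B)-norm (Assumption 1: det ∇ₛX̄ = 1 and X̄ ∈ C¹([0,T];W^{1,∞}))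
    (CX : ℝ) (hCX : ∀ t ∈ Icc 0 T, ∀ v : V, ‖comp t v‖ ≤ CX * ‖v‖)
    (ρf δρ κ : ℝ) (hρf : 0 < ρf) (hδρ : 0 ≤ δρ) (hκ : 0 < κ)
    (ψ : ℕ → V) (lf : ℕ → ℝ) (hlf : ∀ j, 0 < lf j)
    (hψeig : ∀ j, ∀ v : V, a (ψ j) v = lf j * ⟪jV (ψ j), jV v⟫)
    (hψnorm : ∀ j, ‖jV (ψ j)‖ = 1)
    (hψortho : ∀ i j, i ≠ j → ⟪jV (ψ i), jV (ψ j)⟫ = 0)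
    (χ : ℕ → H1B) (ls : ℕ → ℝ) (hls : ∀ r, 1 < ls r)
    (hχeig : ∀ r, ∀ μ : H1B, ⟪μ, χ r⟫ = ls r * ⟪ιB (χ r), ιB μ⟫)
    (hχnorm : ∀ r, ‖χ r‖ = 1)
    (hχortho : ∀ r s, r ≠ s → ⟪χ r, χ s⟫ = 0)
    (u0 : V) (us0 X0 : H1B)
    (hcompat : ∀ μ : H1B, ⟪μ, comp 0 u0 - us0⟫ = 0)
    -- |B| is the measure of B; the initial datum X₀(s) = s satisfies
    -- ‖X₀‖²_{1,B} ≤ c₀ |B|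
    (volB c0 : ℝ) (hvolB : 0 ≤ volB) (hc0 : 0 ≤ c0)
    (hX0 : ‖X0‖ ^ 2 ≤ c0 * volB)
    -- the family of Galerkin solutions
    (um : ℕ → ℝ → V) (wm Xm : ℕ → ℝ → H1B)
    (hsol : ∀ m : ℕ,
      GalerkinSolves T jV ιB gradB a comp ρf δρ κ ψ χ u0 X0 m
        (um m) (wm m) (Xm m)) :
    ∃ C : ℝ, 0 < C ∧ ∀ m : ℕ,
      -- (a)
      eLpNorm (fun t => jV (um m t)) ⊤ (volume.restrict (Ioc 0 T))
          + eLpNorm (um m) 2 (volume.restrict (Ioc 0 T))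
        ≤ ENNReal.ofReal
            (C * (‖jV (um m 0)‖ + ‖ιB (wm m 0)‖ + Real.sqrt volB)) ∧
      -- (b)
      eLpNorm (fun t => ιB (wm m t)) ⊤ (volume.restrict (Ioc 0 T))
          + eLpNorm (wm m) 2 (volume.restrict (Ioc 0 T))
        ≤ ENNReal.ofReal
            (C * (‖jV (um m 0)‖ + ‖ιB (wm m 0)‖ + Real.sqrt volB)) ∧
      -- (c)
      eLpNorm (Xm m) ⊤ (volume.restrict (Ioc 0 T))
        ≤ ENNReal.ofReal
            (C * (‖jV (um m 0)‖ + ‖ιB (wm m 0)‖ + Real.sqrt volB)) ∧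
      -- (d), with ∂X^m/∂t the derivative of X^m on [0,T]
      eLpNorm (fun t => ιB (derivWithin (Xm m) (Icc 0 T) t)) ⊤
            (volume.restrict (Ioc 0 T))
          + eLpNorm (fun t => derivWithin (Xm m) (Icc 0 T) t) ⊤
            (volume.restrict (Ioc 0 T))
        ≤ ENNReal.ofReal
            (C * (‖jV (um m 0)‖ + ‖ιB (wm m 0)‖ + Real.sqrt volB)) := by
  classical
  have hUD : UniqueDiffOn ℝ (Icc 0 T) := uniqueDiffOn_Icc hT
  have h0I : (0:ℝ) ∈ Icc 0 T := ⟨le_rfl, hT.le⟩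
  -- CP is positive
  have hψ0ne : ψ 0 ≠ 0 := by
    intro h
    have h1 := hψnorm 0
    rw [h, map_zero, norm_zero] at h1
    norm_num at h1
  have hCPpos : 0 < CP := by
    by_contra hcp
    push_neg at hcp
    have h1 := hCP (ψ 0)
    have h2 : 0 < ‖ψ 0‖ := norm_pos_iff.mpr hψ0ne
    nlinarith [norm_nonneg (gradΩ (ψ 0))]
  have hsk : 0 < Real.sqrt k := Real.sqrt_pos.mpr hk
  -- the constant U
  have hKorn' : ∀ v : V, 0 ≤ a v v := by
    intro v
    have := hKorn v
    nlinarith [sq_nonneg (‖gradΩ v‖)]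
  have hU : ∀ v : V, ‖v‖ ≤ (CP / Real.sqrt k) * Real.sqrt (a v v) := by
    intro v
    have h1 := hKorn v
    have h2 := hCP v
    have h3 : ‖gradΩ v‖^2 ≤ a v v / k := by
      rw [le_div_iff₀ hk]
      linarith
    have h4 : ‖gradΩ v‖ ≤ Real.sqrt (a v v) / Real.sqrt k := by
      have h5 : ‖gradΩ v‖ ≤ Real.sqrt (a v v / k) := by
        rw [← Real.sqrt_sq (norm_nonneg (gradΩ v))]
        exact Real.sqrt_le_sqrt h3
      rwa [Real.sqrt_div (hKorn' v) k] at h5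
    calc ‖v‖ ≤ CP * ‖gradΩ v‖ := h2
      _ ≤ CP * (Real.sqrt (a v v) / Real.sqrt k) :=
          mul_le_mul_of_nonneg_left h4 hCPpos.le
      _ = (CP / Real.sqrt k) * Real.sqrt (a v v) := by ring
  have hU0 : 0 ≤ CP / Real.sqrt k := div_nonneg hCPpos.le hsk.le
  have hW : ∀ t ∈ Icc 0 T, ∀ v : V,
      ‖comp t v‖ ≤ (|CX| * (CP / Real.sqrt k)) * Real.sqrt (a v v) := by
    intro t ht v
    have h1 := hCX t ht v
    have h2 : CX * ‖v‖ ≤ |CX| * ‖v‖ :=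
      mul_le_mul_of_nonneg_right (le_abs_self _) (norm_nonneg _)
    have h3 : |CX| * ‖v‖ ≤ |CX| * ((CP / Real.sqrt k) * Real.sqrt (a v v)) :=
      mul_le_mul_of_nonneg_left (hU v) (abs_nonneg _)
    calc ‖comp t v‖ ≤ CX * ‖v‖ := h1
      _ ≤ |CX| * ((CP / Real.sqrt k) * Real.sqrt (a v v)) := le_trans h2 h3
      _ = (|CX| * (CP / Real.sqrt k)) * Real.sqrt (a v v) := by ring
  have hW0 : 0 ≤ |CX| * (CP / Real.sqrt k) := mul_nonneg (abs_nonneg _) hU0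
  -- bound on the derivative of comp
  obtain ⟨M0, hM0⟩ := isCompact_Icc.exists_bound_of_continuousOn
    (hcomp.continuousOn_derivWithin hUD le_rfl)
  obtain ⟨M', hM'0, hM'⟩ : ∃ M' : ℝ, 0 ≤ M' ∧
      ∀ t ∈ Icc 0 T, ‖derivWithin comp (Icc 0 T) t‖ ≤ M' :=
    ⟨max M0 0, le_max_right _ _, fun t ht => (hM0 t ht).trans (le_max_left _ _)⟩
  -- apply the core lemma to every m
  have hcore := fun m : ℕ => galerkin_core T hT jV hjV gradB ιB hc a hKorn'
    comp hcomp ρf δρ κ hρf hδρ hκ ψ lf hψeig hψortho χ ls hχeig u0 X0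
    volB c0 hvolB hc0 hX0
    (CP / Real.sqrt k) hU0 hU (|CX| * (CP / Real.sqrt k)) hW0 hW M' hM'0 hM'
    m (um m) (wm m) (Xm m) (hsol m)
  -- global constants
  obtain ⟨KA2, hKA2_def⟩ : ∃ x : ℝ,
      x = gkKA2 ‖a‖ ‖jV‖ ‖u0‖ (CP / Real.sqrt k) (|CX| * (CP / Real.sqrt k))
        M' T ρf δρ κ c0 volB := ⟨_, rfl⟩
  obtain ⟨Ku, hKu_def⟩ : ∃ x : ℝ, x = (CP / Real.sqrt k) * Real.sqrt KA2 := ⟨_, rfl⟩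
  obtain ⟨Kw, hKw_def⟩ : ∃ x : ℝ,
      x = (|CX| * (CP / Real.sqrt k)) * Real.sqrt KA2 := ⟨_, rfl⟩
  obtain ⟨KX, hKX_def⟩ : ∃ x : ℝ,
      x = Real.sqrt (c0 * volB) + Kw * T := ⟨_, rfl⟩
  obtain ⟨Kj, hKj_def⟩ : ∃ x : ℝ, x = ‖jV‖ * Ku := ⟨_, rfl⟩
  obtain ⟨K, hK_def⟩ : ∃ x : ℝ,
      x = Kj + Real.sqrt T * Ku + Kw + Real.sqrt T * Kw + KX + (Kw + Kw) + 1 :=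
    ⟨_, rfl⟩
  have hKu0 : 0 ≤ Ku := by rw [hKu_def]; exact mul_nonneg hU0 (Real.sqrt_nonneg _)
  have hKw0 : 0 ≤ Kw := by rw [hKw_def]; exact mul_nonneg hW0 (Real.sqrt_nonneg _)
  have hKX0 : 0 ≤ KX := by
    rw [hKX_def]
    exact add_nonneg (Real.sqrt_nonneg _) (mul_nonneg hKw0 hT.le)
  have hKj0 : 0 ≤ Kj := by rw [hKj_def]; exact mul_nonneg jV.opNorm_nonneg hKu0
  have hsT : 0 ≤ Real.sqrt T := Real.sqrt_nonneg _
  have hsTu : 0 ≤ Real.sqrt T * Ku := mul_nonneg hsT hKu0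
  have hsTw : 0 ≤ Real.sqrt T * Kw := mul_nonneg hsT hKw0
  have hK0 : 0 ≤ K := by
    rw [hK_def]
    linarith only [hKj0, hsTu, hKw0, hsTw, hKX0]
  -- uniform pointwise bounds
  have hbounds : ∀ m : ℕ, ∀ t ∈ Icc 0 T,
      ‖um m t‖ ≤ Ku ∧ ‖wm m t‖ ≤ Kw ∧ ‖Xm m t‖ ≤ KX ∧
      ‖derivWithin (Xm m) (Icc 0 T) t‖ ≤ Kw := by
    intro m t ht
    obtain ⟨hA, hu2, hw2, hdX2, hX2⟩ := (hcore m).1 t ht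
    rw [← hKA2_def] at hA hX2
    have hsq : Real.sqrt ((a (um m t)) (um m t)) ≤ Real.sqrt KA2 :=
      Real.sqrt_le_sqrt hA
    refine ⟨?_, ?_, ?_, ?_⟩
    · rw [hKu_def]
      exact hu2.trans (mul_le_mul_of_nonneg_left hsq hU0)
    · rw [hKw_def]
      exact hw2.trans (mul_le_mul_of_nonneg_left hsq hW0)
    · rw [hKX_def, hKw_def]
      exact hX2
    · rw [hKw_def]
      refine hdX2.trans (?_)
      have := hw2.trans (mul_le_mul_of_nonneg_left hsq hW0)
      exact this
  -- choice of the constant C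
  obtain ⟨C, hCpos, hC⟩ : ∃ C : ℝ, 0 < C ∧ ∀ m : ℕ,
      K ≤ C * (‖jV (um m 0)‖ + ‖ιB (wm m 0)‖ + Real.sqrt volB)
      ∨ (um m 0 = 0 ∧ volB = 0) := by
    have habs : ∀ (m : ℕ) (δ : ℝ), 0 < δ →
        δ ≤ ‖jV (um m 0)‖ + ‖ιB (wm m 0)‖ + Real.sqrt volB →
        K ≤ (K / δ + 1) * (‖jV (um m 0)‖ + ‖ιB (wm m 0)‖ + Real.sqrt volB) := by
      intro m δ hδ hD
      have hq : 0 ≤ K / δ := div_nonneg hK0 hδ.le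
      have hDn : 0 ≤ ‖jV (um m 0)‖ + ‖ιB (wm m 0)‖ + Real.sqrt volB :=
        hδ.le.trans hD
      calc K = K / δ * δ := (div_mul_cancel₀ _ hδ.ne').symm
        _ ≤ K / δ * (‖jV (um m 0)‖ + ‖ιB (wm m 0)‖ + Real.sqrt volB) :=
            mul_le_mul_of_nonneg_left hD hq
        _ ≤ (K / δ + 1) * (‖jV (um m 0)‖ + ‖ιB (wm m 0)‖ + Real.sqrt volB) :=
            mul_le_mul_of_nonneg_right (by linarith only []) hDn
    have hzerou : ∀ m : ℕ, (∀ i : Fin m, ⟪jV u0, jV (ψ (i:ℕ))⟫ = 0) →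
        um m 0 = 0 := by
      intro m hm
      obtain ⟨_, _, _, huVm, _, _, _, _, _, hinitu, _, _⟩ := hsol m
      have hco : ∀ i : Fin m, ⟪jV (um m 0), jV (ψ (i:ℕ))⟫ = 0 := by
        intro i
        have h1 := hinitu i
        rw [map_sub, inner_sub_left] at h1
        have h2 := hm i
        linarith only [h1, h2]
      have hall : ∀ x ∈ Submodule.span ℝ (Set.range fun i : Fin m => ψ (i:ℕ)),
          ⟪jV x, jV (um m 0)⟫ = 0 := by
        intro x hx
        induction hx using Submodule.span_induction with
        | mem x hxm =>
            obtain ⟨i, rfl⟩ := hxm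
            rw [real_inner_comm]
            exact hco i
        | zero => simp
        | add x y hx hy ihx ihy => rw [map_add, inner_add_left, ihx, ihy]; ring
        | smul c x hx ih => rw [_root_.map_smul, real_inner_smul_left, ih]; ring
      have h3 : jV (um m 0) = 0 :=
        inner_self_eq_zero.mp (hall (um m 0) (huVm 0 h0I))
      exact hjV (by rw [h3, map_zero])
    by_cases hvol : 0 < volB
    · have hsv : 0 < Real.sqrt volB := Real.sqrt_pos.mpr hvol
      refine ⟨K / Real.sqrt volB + 1, by positivity, fun m => Or.inl ?_⟩
      refine habs m _ hsv ?_
      have := norm_nonneg (jV (um m 0))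
      have := norm_nonneg (ιB (wm m 0))
      linarith
    · have hvol0 : volB = 0 := le_antisymm (not_lt.mp hvol) hvolB
      by_cases hβ : ∃ j : ℕ, ⟪jV u0, jV (ψ j)⟫ ≠ 0
      · have hj0 := Nat.find_spec hβ
        have hδpos : 0 < |⟪jV u0, jV (ψ (Nat.find hβ))⟫| := abs_pos.mpr hj0
        refine ⟨K / |⟪jV u0, jV (ψ (Nat.find hβ))⟫| + 1, by positivity, fun m => ?_⟩
        by_cases hm : ∀ i : Fin m, ⟪jV u0, jV (ψ (i:ℕ))⟫ = 0
        · exact Or.inr ⟨hzerou m hm, hvol0⟩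
        · left
          push_neg at hm
          obtain ⟨i, hi⟩ := hm
          have hj0m : Nat.find hβ < m := lt_of_le_of_lt (Nat.find_min' hβ hi) i.2
          refine habs m _ hδpos ?_
          obtain ⟨_, _, _, _, _, _, _, _, _, hinitu, _, _⟩ := hsol m
          have h1 := hinitu ⟨Nat.find hβ, hj0m⟩
          rw [map_sub, inner_sub_left] at h1
          have h2 : ⟪jV (um m 0), jV (ψ (Nat.find hβ))⟫
              = ⟪jV u0, jV (ψ (Nat.find hβ))⟫ := by linarith only [h1]
          have h3 : |⟪jV u0, jV (ψ (Nat.find hβ))⟫| ≤ ‖jV (um m 0)‖ := by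
            rw [← h2]
            calc |⟪jV (um m 0), jV (ψ (Nat.find hβ))⟫|
                ≤ ‖jV (um m 0)‖ * ‖jV (ψ (Nat.find hβ))‖ :=
                  abs_real_inner_le_norm _ _
              _ = ‖jV (um m 0)‖ := by rw [hψnorm]; ring
          have h4 := norm_nonneg (ιB (wm m 0))
          have h5 := Real.sqrt_nonneg volB
          linarith only [h3, h4, h5]
      · push_neg at hβ
        exact ⟨1, one_pos, fun m => Or.inr ⟨hzerou m (fun i => hβ (i:ℕ)), hvol0⟩⟩
  -- conclusion
  refine ⟨C, hCpos, fun m => ?_⟩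
  rcases hC m with hKD | hzm
  · -- uniformly bounded case
    have hb := hbounds m
    have h_u : ∀ t ∈ Ioc 0 T, ‖um m t‖ ≤ Ku :=
      fun t ht => (hb t (Ioc_subset_Icc_self ht)).1
    have h_ju : ∀ t ∈ Ioc 0 T, ‖jV (um m t)‖ ≤ Kj := by
      intro t ht
      rw [hKj_def]
      calc ‖jV (um m t)‖ ≤ ‖jV‖ * ‖um m t‖ := jV.le_opNorm _
        _ ≤ ‖jV‖ * Ku := mul_le_mul_of_nonneg_left (h_u t ht) jV.opNorm_nonneg
    have h_w : ∀ t ∈ Ioc 0 T, ‖wm m t‖ ≤ Kw :=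
      fun t ht => (hb t (Ioc_subset_Icc_self ht)).2.1
    have h_iw : ∀ t ∈ Ioc 0 T, ‖ιB (wm m t)‖ ≤ Kw := by
      intro t ht
      have h1 : ‖ιB (wm m t)‖ ≤ ‖wm m t‖ := by
        have h2 := hc (wm m t) (wm m t)
        rw [real_inner_self_eq_norm_sq, real_inner_self_eq_norm_sq,
          real_inner_self_eq_norm_sq] at h2
        nlinarith [norm_nonneg (wm m t), norm_nonneg (ιB (wm m t)),
          sq_nonneg (‖gradB (wm m t)‖)]
      exact h1.trans (h_w t ht)
    have h_X : ∀ t ∈ Ioc 0 T, ‖Xm m t‖ ≤ KX :=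
      fun t ht => (hb t (Ioc_subset_Icc_self ht)).2.2.1
    have h_dX : ∀ t ∈ Ioc 0 T, ‖derivWithin (Xm m) (Icc 0 T) t‖ ≤ Kw :=
      fun t ht => (hb t (Ioc_subset_Icc_self ht)).2.2.2
    have h_idX : ∀ t ∈ Ioc 0 T, ‖ιB (derivWithin (Xm m) (Icc 0 T) t)‖ ≤ Kw := by
      intro t ht
      have h2 := hc (derivWithin (Xm m) (Icc 0 T) t) (derivWithin (Xm m) (Icc 0 T) t)
      rw [real_inner_self_eq_norm_sq, real_inner_self_eq_norm_sq,
        real_inner_self_eq_norm_sq] at h2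
      have h1 : ‖ιB (derivWithin (Xm m) (Icc 0 T) t)‖
          ≤ ‖derivWithin (Xm m) (Icc 0 T) t‖ := by
        nlinarith [norm_nonneg (derivWithin (Xm m) (Icc 0 T) t),
          norm_nonneg (ιB (derivWithin (Xm m) (Icc 0 T) t)),
          sq_nonneg (‖gradB (derivWithin (Xm m) (Icc 0 T) t)‖)]
      exact h1.trans (h_dX t ht)
    have hKsum : ∀ piece : ℝ, piece ≤ K →
        piece ≤ C * (‖jV (um m 0)‖ + ‖ιB (wm m 0)‖ + Real.sqrt volB) :=
      fun piece hp => hp.trans hKD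
    refine ⟨?_, ?_, ?_, ?_⟩
    · refine aux_pair hT _ _ Kj Ku _ h_ju h_u hKj0 hKu0 (hKsum _ ?_)
      rw [hK_def]
      linarith only [hKw0, hsTw, hKX0]
    · refine aux_pair hT _ _ Kw Kw _ h_iw h_w hKw0 hKw0 (hKsum _ ?_)
      rw [hK_def]
      linarith only [hKj0, hsTu, hKX0, hKw0]
    · refine aux_single _ KX _ h_X (hKsum _ ?_)
      rw [hK_def]
      linarith only [hKj0, hsTu, hKw0, hsTw]
    · refine aux_pair_top _ _ Kw Kw _ h_idX h_dX hKw0 hKw0 (hKsum _ ?_)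
      rw [hK_def]
      linarith only [hKj0, hsTu, hKw0, hsTw, hKX0]
  · -- degenerate case: everything vanishes
    have hzz := (hcore m).2 ⟨hzm.1, hzm.2⟩
    have e1 : eLpNorm (fun t => jV (um m t)) ⊤ (volume.restrict (Ioc 0 T)) = 0 :=
      aux_zero_eLp _ _ (fun t ht => by
        rw [(hzz t (Ioc_subset_Icc_self ht)).1, map_zero])
    have e2 : eLpNorm (um m) 2 (volume.restrict (Ioc 0 T)) = 0 :=
      aux_zero_eLp _ _ (fun t ht => (hzz t (Ioc_subset_Icc_self ht)).1)
    have e3 : eLpNorm (fun t => ιB (wm m t)) ⊤ (volume.restrict (Ioc 0 T)) = 0 :=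
      aux_zero_eLp _ _ (fun t ht => by
        rw [(hzz t (Ioc_subset_Icc_self ht)).2.1, map_zero])
    have e4 : eLpNorm (wm m) 2 (volume.restrict (Ioc 0 T)) = 0 :=
      aux_zero_eLp _ _ (fun t ht => (hzz t (Ioc_subset_Icc_self ht)).2.1)
    have e5 : eLpNorm (Xm m) ⊤ (volume.restrict (Ioc 0 T)) = 0 :=
      aux_zero_eLp _ _ (fun t ht => (hzz t (Ioc_subset_Icc_self ht)).2.2.1)
    have e6 : eLpNorm (fun t => ιB (derivWithin (Xm m) (Icc 0 T) t)) ⊤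
        (volume.restrict (Ioc 0 T)) = 0 :=
      aux_zero_eLp _ _ (fun t ht => by
        rw [(hzz t (Ioc_subset_Icc_self ht)).2.2.2, map_zero])
    have e7 : eLpNorm (fun t => derivWithin (Xm m) (Icc 0 T) t) ⊤
        (volume.restrict (Ioc 0 T)) = 0 :=
      aux_zero_eLp _ _ (fun t ht => (hzz t (Ioc_subset_Icc_self ht)).2.2.2)
    refine ⟨?_, ?_, ?_, ?_⟩
    · rw [e1, e2]; simp
    · rw [e3, e4]; simp
    · rw [e5]; simp
    · rw [e6, e7]; simp



end
end

section
/- Let (u, w, X) be the solution of Problem (inK) and λ ∈ L²(0,T; H¹(B)^d) the Lagrange multiplier satisfying c(λ(t), z) = δρ (∂w/∂t(t), z)_B + κ(∇_s X(t), ∇_s z)_B for all z ∈ H¹(B)^d. Then there exists a unique p ∈ L²(0,T; L²₀(Ω)) such that (p(t), div v) = ρ_f (d/dt)(u(t), v) + a(u(t), v) + c(λ(t), v∘X̄(t)) for all v ∈ H¹₀(Ω)^d, so that (u, p, X, w, λ) is the unique solution of the full linearized fluid-structure interaction Problem (linI); moreover ‖p‖_{L²(0,T;L²(Ω))} ≤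 (1/β)‖ℓ‖_{L²(0,T;H^{-1}(Ω))} where ℓ denotes the right-hand side functional and β the inf-sup constant of the divergence operator on H¹₀(Ω)^d. -/
/-!
The inf-sup condition makes the divergence `B` surjective and gives the lower bound
`β ‖q‖ ≤ ‖B† q‖` for its adjoint, so the form `⟪B† q, B† r⟫` is coercive and, by Lax–Milgram,
`B B†` is invertible. For a functional `f` vanishing on `ker B` with Riesz representative `g`,
the pressure `q = (B B†)⁻¹ B g` satisfies `B† q - g ∈ ker B ∩ (ker B)ᗮ`, hence `B† q = g`, which is
`⟪q, B v⟫ = f v`. This is a bounded linear operator applied to `ℓ(t)`, so the pressure is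
measurable and in `L²`, and the inf-sup condition bounds it pointwise by `‖ℓ(t)‖ / β`.
-/

open MeasureTheory Set
open scoped ENNReal RealInnerProductSpace

section InfSup

variable {V Q : Type*} [NormedAddCommGroup V] [InnerProductSpace ℝ V]
  [NormedAddCommGroup Q] [InnerProductSpace ℝ Q] {B : V →L[ℝ] Q} {β : ℝ}

theorem mul_norm_le_opNorm_of_inner_apply_eq (hinfsup : ∀ q : Q, ∃ v : V, B v = q ∧ β * ‖v‖ ≤ ‖q‖)
    {q : Q} {f : V →L[ℝ] ℝ} (hq : ∀ v, ⟪q, B v⟫ = f v) : β * ‖q‖ ≤ ‖f‖ := by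
  rcases le_or_gt β 0 with hβ | hβ
  · nlinarith [norm_nonneg q, norm_nonneg f]
  obtain ⟨v, rfl, hv⟩ := hinfsup q
  have hsq : ‖B v‖ * ‖B v‖ ≤ ‖f‖ * ‖v‖ :=
    calc ‖B v‖ * ‖B v‖ = f v := by rw [← hq, real_inner_self_eq_norm_mul_norm]
      _ ≤ ‖f v‖ := Real.le_norm_self _
      _ ≤ ‖f‖ * ‖v‖ := f.le_opNorm v
  rcases (norm_nonneg (B v)).eq_or_lt with hzero | hpos
  · rw [← hzero, mul_zero]; exact norm_nonneg f
  · nlinarith [norm_nonneg f]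

theorem eq_of_inner_apply_eq (hB : Function.Surjective B) {q q' : Q}
    (h : ∀ v, ⟪q, B v⟫ = ⟪q', B v⟫) : q = q' :=
  ext_inner_right ℝ fun w => by obtain ⟨v, rfl⟩ := hB w; exact h v

variable [CompleteSpace V] [CompleteSpace Q]

theorem mul_norm_le_norm_adjoint (hinfsup : ∀ q : Q, ∃ v : V, B v = q ∧ β * ‖v‖ ≤ ‖q‖) (q : Q) :
    β * ‖q‖ ≤ ‖B.adjoint q‖ := by
  rw [← innerSL_apply_norm ℝ (B.adjoint q)]
  exact mul_norm_le_opNorm_of_inner_apply_eq (f := innerSL ℝ (B.adjoint q)) hinfsup fun v => by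
    rw [innerSL_apply_apply, B.adjoint_inner_left]

theorem isCoercive_inner_adjoint (hβ : 0 < β)
    (hinfsup : ∀ q : Q, ∃ v : V, B v = q ∧ β * ‖v‖ ≤ ‖q‖) :
    IsCoercive ((innerSL ℝ).bilinearComp B.adjoint B.adjoint) := by
  refine ⟨β * β, mul_pos hβ hβ, fun q => ?_⟩
  have hlow := mul_norm_le_norm_adjoint hinfsup q
  show β * β * ‖q‖ * ‖q‖ ≤ ⟪B.adjoint q, B.adjoint q⟫
  rw [real_inner_self_eq_norm_mul_norm]
  nlinarith [mul_le_mul hlow hlow (by positivity) (norm_nonneg _)]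

theorem continuousLinearEquivOfBilin_inner_adjoint_apply (hβ : 0 < β)
    (hinfsup : ∀ q : Q, ∃ v : V, B v = q ∧ β * ‖v‖ ≤ ‖q‖) (q : Q) :
    (isCoercive_inner_adjoint hβ hinfsup).continuousLinearEquivOfBilin q = B (B.adjoint q) :=
  ext_inner_right ℝ fun r => by
    rw [IsCoercive.continuousLinearEquivOfBilin_apply, ContinuousLinearMap.bilinearComp_apply,
      innerSL_apply_apply, ContinuousLinearMap.adjoint_inner_right]

theorem exists_clm_inner_apply_eq (hβ : 0 < β)
    (hinfsup : ∀ q : Q, ∃ v : V, B v = q ∧ β * ‖v‖ ≤ ‖q‖) :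
    ∃ P : (V →L[ℝ] ℝ) →L[ℝ] Q,
      ∀ f : V →L[ℝ] ℝ, (∀ v, B v = 0 → f v = 0) → ∀ v, ⟪P f, B v⟫ = f v := by
  set E := (isCoercive_inner_adjoint hβ hinfsup).continuousLinearEquivOfBilin
  set R := (InnerProductSpace.toDual ℝ V).symm.toContinuousLinearEquiv.toContinuousLinearMap
  refine ⟨(E.symm : Q →L[ℝ] Q).comp (B.comp R), fun f hf v => ?_⟩
  set q := E.symm (B (R f))
  have hR : ∀ w, ⟪R f, w⟫ = f w := fun w => InnerProductSpace.toDual_symm_apply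
  have hq : ∀ w, ⟪q, B w⟫ = ⟪B.adjoint q, w⟫ := fun w =>
    (ContinuousLinearMap.adjoint_inner_left B w q).symm
  have hker : B (B.adjoint q - R f) = 0 := by
    rw [map_sub, ← continuousLinearEquivOfBilin_inner_adjoint_apply hβ hinfsup,
      E.apply_symm_apply, sub_self]
  -- `B† q - R f` lies in `ker B` and is orthogonal to `ker B`.
  have horth : ⟪B.adjoint q - R f, B.adjoint q - R f⟫ = 0 := by
    rw [inner_sub_left, ← hq, hker, inner_zero_right, hR, hf _ hker, sub_self]
  have hrepr : B.adjoint q = R f := sub_eq_zero.mp (inner_self_eq_zero.mp horth)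
  show ⟪q, B v⟫ = f v
  rw [hq, hrepr, hR]

end InfSup

theorem existence_uniqueness_pressure_general
    (Huo Q : Type)
    [NormedAddCommGroup Huo] [InnerProductSpace ℝ Huo] [CompleteSpace Huo]
    [NormedAddCommGroup Q] [InnerProductSpace ℝ Q] [CompleteSpace Q]
    (T : ℝ)
    -- the divergence operator and its inf-sup condition with constant β
    (divOp : Huo →L[ℝ] Q) (β : ℝ) (hβ : 0 < β)
    (hinfsup : ∀ q : Q, ∃ v : Huo, divOp v = q ∧ β * ‖v‖ ≤ ‖q‖)
    -- the right-hand side functional ℓ(t)v = ρ_f(d/dt)(u(t),v) + a(u(t),v) + c(λ(t), v∘X̄(t))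
    (ℓ : ℝ → Huo →L[ℝ] ℝ)
    (hℓL2 : MemLp ℓ 2 (volume.restrict (Ioc 0 T)))
    -- first equation of (split): ℓ(t) vanishes on the kernel of the divergence
    (hker : ∀ᵐ t ∂(volume.restrict (Ioc 0 T)),
      ∀ v : Huo, divOp v = 0 → ℓ t v = 0) :
    ∃ p : ℝ → Q,
      MemLp p 2 (volume.restrict (Ioc 0 T)) ∧
      (∀ᵐ t ∂(volume.restrict (Ioc 0 T)),
        ∀ v : Huo, ⟪p t, divOp v⟫ = ℓ t v) ∧
      -- the L² bound ‖p‖_{L²(0,T;L²)} ≤ (1/β) ‖ℓ‖_{L²(0,T;H⁻¹)}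
      eLpNorm p 2 (volume.restrict (Ioc 0 T))
        ≤ ENNReal.ofReal (1 / β) * eLpNorm ℓ 2 (volume.restrict (Ioc 0 T)) ∧
      -- uniqueness
      ∀ p' : ℝ → Q,
        MemLp p' 2 (volume.restrict (Ioc 0 T)) →
        (∀ᵐ t ∂(volume.restrict (Ioc 0 T)),
          ∀ v : Huo, ⟪p' t, divOp v⟫ = ℓ t v) →
        ∀ᵐ t ∂(volume.restrict (Ioc 0 T)), p' t = p t := by
  set μ := volume.restrict (Ioc 0 T)
  obtain ⟨P, hP⟩ := exists_clm_inner_apply_eq hβ hinfsup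
  have hp : ∀ᵐ t ∂μ, ∀ v, ⟪P (ℓ t), divOp v⟫ = ℓ t v := by
    filter_upwards [hker] with t ht using hP (ℓ t) ht
  have hbound : ∀ᵐ t ∂μ, ‖P (ℓ t)‖ ≤ ‖((1 / β : ℝ) • ℓ) t‖ := by
    filter_upwards [hp] with t ht
    rw [Pi.smul_apply, norm_smul, Real.norm_of_nonneg (by positivity), one_div_mul_eq_div,
      le_div_iff₀' hβ]
    exact mul_norm_le_opNorm_of_inner_apply_eq hinfsup ht
  refine ⟨fun t => P (ℓ t), P.comp_memLp' hℓL2, hp, ?_, fun p' _ hp' => ?_⟩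
  · calc eLpNorm (fun t => P (ℓ t)) 2 μ ≤ eLpNorm ((1 / β : ℝ) • ℓ) 2 μ := eLpNorm_mono_ae hbound
      _ = ‖(1 / β : ℝ)‖ₑ * eLpNorm ℓ 2 μ := eLpNorm_const_smul _ ℓ 2 _
      _ = ENNReal.ofReal (1 / β) * eLpNorm ℓ 2 μ := by
        rw [Real.enorm_eq_ofReal (by positivity)]
  · have hsurj : Function.Surjective divOp := fun q => (hinfsup q).imp fun _ hv => hv.1
    filter_upwards [hp, hp'] with t ht ht'
    exact eq_of_inner_apply_eq hsurj fun v => (ht' v).trans (ht v).symm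

theorem existence_uniqueness_pressure
    (H Huo Q H1B GB : Type)
    [NormedAddCommGroup H] [InnerProductSpace ℝ H] [CompleteSpace H]
    [NormedAddCommGroup Huo] [InnerProductSpace ℝ Huo] [CompleteSpace Huo]
    [NormedAddCommGroup Q] [InnerProductSpace ℝ Q] [CompleteSpace Q]
    [NormedAddCommGroup H1B] [InnerProductSpace ℝ H1B] [CompleteSpace H1B]
    [NormedAddCommGroup GB] [InnerProductSpace ℝ GB] [CompleteSpace GB]
    (T : ℝ) (hT : 0 < T)
    (ρf δρ κ : ℝ) (hρf : 0 < ρf) (hδρ : 0 ≤ δρ) (hκ : 0 < κ)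
    (jV : Huo →L[ℝ] H)
    (a : Huo →L[ℝ] Huo →L[ℝ] ℝ)
    -- the divergence operator and its inf-sup condition with constant β
    (divOp : Huo →L[ℝ] Q) (β : ℝ) (hβ : 0 < β)
    (hinfsup : ∀ q : Q, ∃ v : Huo, divOp v = q ∧ β * ‖v‖ ≤ ‖q‖)
    -- composition with X̄(t) (Assumption 1)
    (comp : ℝ → Huo →L[ℝ] H1B)
    (hcomp : ContDiffOn ℝ 1 comp (Icc 0 T))
    -- the solution u of Problem (inK), its time derivative ut ∈ L²(0,T;H⁻¹),
    -- and the Lagrange multiplier λ ∈ L²(0,T;H¹(B)^d)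
    (u : ℝ → Huo) (ut : ℝ → Huo →L[ℝ] ℝ) (lam : ℝ → H1B)
    (hu : MemLp u 2 (volume.restrict (Ioc 0 T)))
    (hut : MemLp ut 2 (volume.restrict (Ioc 0 T)))
    (hlam : MemLp lam 2 (volume.restrict (Ioc 0 T)))
    (hude : ∀ v : Huo, ∀ᵐ t ∂(volume.restrict (Ioc 0 T)),
      HasDerivAt (fun s => ⟪jV (u s), jV v⟫) (ut t v) t)
    -- the right-hand side functional ℓ(t)v = ρ_f(d/dt)(u(t),v) + a(u(t),v) + c(λ(t), v∘X̄(t))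
    (ℓ : ℝ → Huo →L[ℝ] ℝ)
    (hℓ : ∀ t : ℝ, ∀ v : Huo,
      ℓ t v = ρf * ut t v + a (u t) v + ⟪lam t, comp t v⟫)
    (hℓL2 : MemLp ℓ 2 (volume.restrict (Ioc 0 T)))
    -- first equation of (split): ℓ(t) vanishes on the kernel of the divergence
    (hker : ∀ᵐ t ∂(volume.restrict (Ioc 0 T)),
      ∀ v : Huo, divOp v = 0 → ℓ t v = 0) :
    ∃ p : ℝ → Q,
      MemLp p 2 (volume.restrict (Ioc 0 T)) ∧
      (∀ᵐ t ∂(volume.restrict (Ioc 0 T)),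
        ∀ v : Huo, ⟪p t, divOp v⟫ = ℓ t v) ∧
      -- the L² bound ‖p‖_{L²(0,T;L²)} ≤ (1/β) ‖ℓ‖_{L²(0,T;H⁻¹)}
      eLpNorm p 2 (volume.restrict (Ioc 0 T))
        ≤ ENNReal.ofReal (1 / β) * eLpNorm ℓ 2 (volume.restrict (Ioc 0 T)) ∧
      -- uniqueness
      ∀ p' : ℝ → Q,
        MemLp p' 2 (volume.restrict (Ioc 0 T)) →
        (∀ᵐ t ∂(volume.restrict (Ioc 0 T)),
          ∀ v : Huo, ⟪p' t, divOp v⟫ = ℓ t v) →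
        ∀ᵐ t ∂(volume.restrict (Ioc 0 T)), p' t = p t :=
  existence_uniqueness_pressure_general Huo Q T divOp β hβ hinfsup ℓ hℓL2 hker
end

section
/- Let X̄ satisfy Assumption 1 and let u^m ⇀ u weakly in L²(0,T; H¹₀(Ω)^d) and w^m ⇀ w weakly in L²(0,T; H¹(B)^d), with c(φ_i(t), (u^m∘X̄)(t) − w^m(t)) = 0 for i = 1,…,m and a.e. t. Then u^m∘X̄ ⇀ u∘X̄ weakly in L²(0,T; H¹(B)^d), and the limit satisfies c(μ, (u∘X̄)(t) − w(t)) = 0 for all μ ∈ H¹(B)^d and a.e. t ∈ (0,T); that is, (u(t), w(t)) ∈ K_t. -/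
/-!
Testing the weak convergence of `u^m` against `comp(t)† z(t)` gives the weak convergence of
`u^m∘X̄`, hence `u^m∘X̄ − w^m ⇀ u∘X̄ − w`. For a fixed `i` and a measurable `s`, the test
function `1_s φ_i` is orthogonal to `u^m∘X̄ − w^m` pointwise once `m > i`, so it is orthogonal
to the weak limit; as `s` is arbitrary, `c(φ_i(t), (u∘X̄)(t) − w(t)) = 0` for a.e. `t`, for all
`i` simultaneously, and totality of `{φ_i(t)}` gives `(u∘X̄)(t) = w(t)`.
-/

open MeasureTheory Set Filter Topology
open scoped ENNReal RealInnerProductSpace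

namespace MeasureTheory

variable {α : Type*} [MeasurableSpace α] {μ : Measure α}
  {E F : Type*} [NormedAddCommGroup E] [InnerProductSpace ℝ E]
  [NormedAddCommGroup F] [InnerProductSpace ℝ F]

def WeakL2Tendsto (μ : Measure α) (f : ℕ → α → E) (g : α → E) : Prop :=
  ∀ v : α → E, MemLp v 2 μ → Tendsto (fun n => ∫ t, ⟪f n t - g t, v t⟫ ∂μ) atTop (𝓝 0)

theorem MemLp.integrable_inner {f g : α → E} (hf : MemLp f 2 μ) (hg : MemLp g 2 μ) :
    Integrable (fun t => ⟪f t, g t⟫) μ := by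
  refine (L2.integrable_inner (𝕜 := ℝ) (hf.toLp f) (hg.toLp g)).congr ?_
  filter_upwards [hf.coeFn_toLp, hg.coeFn_toLp] with t hft hgt
  rw [hft, hgt]

theorem MemLp.clm_apply {p : ℝ≥0∞} {Φ : α → E →L[ℝ] F} (hΦ : AEStronglyMeasurable Φ μ)
    {M : ℝ} (hΦM : ∀ᵐ t ∂μ, ‖Φ t‖ ≤ M) {f : α → E} (hf : MemLp f p μ) :
    MemLp (fun t => Φ t (f t)) p μ := by
  refine hf.of_le_mul (c := M)
    (isBoundedBilinearMap_apply.continuous.comp_aestronglyMeasurable (hΦ.prodMk hf.1)) ?_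
  filter_upwards [hΦM] with t ht
  exact ((Φ t).le_opNorm (f t)).trans (by gcongr)

open ContinuousLinearMap in
theorem WeakL2Tendsto.clm_apply [CompleteSpace E] [CompleteSpace F] {f : ℕ → α → E}
    {g : α → E} (hfg : WeakL2Tendsto μ f g) {Φ : α → E →L[ℝ] F}
    (hΦ : AEStronglyMeasurable Φ μ) {M : ℝ} (hΦM : ∀ᵐ t ∂μ, ‖Φ t‖ ≤ M) :
    WeakL2Tendsto μ (fun n t => Φ t (f n t)) (fun t => Φ t (g t)) := by
  intro z hz
  have hadj : MemLp (fun t => adjoint (Φ t) (z t)) 2 μ :=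
    hz.clm_apply (adjoint.continuous.comp_aestronglyMeasurable hΦ)
      (by simpa only [LinearIsometryEquiv.norm_map] using hΦM)
  refine (hfg _ hadj).congr fun n => integral_congr_ae (.of_forall fun t => ?_)
  simp only [adjoint_inner_right, map_sub]

theorem WeakL2Tendsto.sub {f f' : ℕ → α → E} {g g' : α → E} (hfg : WeakL2Tendsto μ f g)
    (hfg' : WeakL2Tendsto μ f' g') (hf : ∀ n, MemLp (f n) 2 μ) (hg : MemLp g 2 μ)
    (hf' : ∀ n, MemLp (f' n) 2 μ) (hg' : MemLp g' 2 μ) :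
    WeakL2Tendsto μ (f - f') (g - g') := by
  intro v hv
  have hlim := (hfg v hv).sub (hfg' v hv)
  rw [sub_zero] at hlim
  refine hlim.congr fun n => ?_
  have hint : Integrable (fun t => ⟪f n t - g t, v t⟫) μ := ((hf n).sub hg).integrable_inner hv
  have hint' : Integrable (fun t => ⟪f' n t - g' t, v t⟫) μ :=
    ((hf' n).sub hg').integrable_inner hv
  rw [← integral_sub hint hint']
  refine integral_congr_ae (.of_forall fun t => ?_)
  simp only [Pi.sub_apply, inner_sub_left]
  ring

theorem WeakL2Tendsto.ae_inner_eq_zero {f : ℕ → α → E} {g φ : α → E}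
    (hfg : WeakL2Tendsto μ f g) (hf : ∀ n, MemLp (f n) 2 μ) (hg : MemLp g 2 μ)
    (hφ : MemLp φ 2 μ) (horth : ∀ᶠ n in atTop, ∀ᵐ t ∂μ, ⟪φ t, f n t⟫ = 0) :
    ∀ᵐ t ∂μ, ⟪φ t, g t⟫ = 0 := by
  refine (hφ.integrable_inner hg).ae_eq_zero_of_forall_setIntegral_eq_zero fun s hs _ => ?_
  have hφs : MemLp (s.indicator φ) 2 μ := hφ.indicator hs
  have inner_indicator : ∀ (h : α → E) t,
      ⟪h t, s.indicator φ t⟫ = s.indicator (fun t => ⟪φ t, h t⟫) t := by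
    intro h t
    by_cases ht : t ∈ s <;> simp [ht, real_inner_comm]
  have htest_eq : ∀ᶠ n in atTop,
      ∫ t, ⟪f n t - g t, s.indicator φ t⟫ ∂μ = -∫ t in s, ⟪φ t, g t⟫ ∂μ := by
    filter_upwards [horth] with n hn
    have hfn : ∫ t, ⟪f n t, s.indicator φ t⟫ ∂μ = 0 := by
      refine integral_eq_zero_of_ae ?_
      filter_upwards [hn] with t ht
      simp [inner_indicator (f n), ht]
    have hgs : ∫ t, ⟪g t, s.indicator φ t⟫ ∂μ = ∫ t in s, ⟪φ t, g t⟫ ∂μ := by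
      simp only [inner_indicator g, integral_indicator hs]
    simp only [inner_sub_left]
    rw [integral_sub ((hf n).integrable_inner hφs) (hg.integrable_inner hφs), hfn, hgs, zero_sub]
  exact neg_eq_zero.mp <| tendsto_nhds_unique
    (tendsto_const_nhds.congr' (htest_eq.mono fun _ h => h.symm)) (hfg _ hφs)

end MeasureTheory

theorem weak_limit_belongs_to_Kt_general
    (V H1B : Type)
    [NormedAddCommGroup V] [InnerProductSpace ℝ V] [CompleteSpace V]
    [NormedAddCommGroup H1B] [InnerProductSpace ℝ H1B] [CompleteSpace H1B]
    (T : ℝ)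
    -- composition with X̄(t) (Assumption 1): bounded uniformly and continuous in t
    (comp : ℝ → V →L[ℝ] H1B) (M : ℝ)
    (hcompcont : ContinuousOn comp (Icc 0 T))
    (hcompbdd : ∀ t ∈ Icc 0 T, ‖comp t‖ ≤ M)
    (ψ : ℕ → V)
    -- for each t, {φ_i(t)} = {comp t (ψ i)} is a basis (a total family) of H¹(B)^d
    (hbasis : ∀ t ∈ Ioc 0 T, ∀ z : H1B,
      (∀ i : ℕ, ⟪comp t (ψ i), z⟫ = 0) → z = 0)
    (um : ℕ → ℝ → V) (u : ℝ → V) (wm : ℕ → ℝ → H1B) (w : ℝ → H1B)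
    (hum : ∀ n, MemLp (um n) 2 (volume.restrict (Ioc 0 T)))
    (hu : MemLp u 2 (volume.restrict (Ioc 0 T)))
    (hwm : ∀ n, MemLp (wm n) 2 (volume.restrict (Ioc 0 T)))
    (hw : MemLp w 2 (volume.restrict (Ioc 0 T)))
    -- u^m ⇀ u weakly in L²(0,T;H¹₀(Ω)^d)
    (huweak : ∀ v : ℝ → V, MemLp v 2 (volume.restrict (Ioc 0 T)) →
      Tendsto (fun n => ∫ t in Ioc 0 T, ⟪um n t - u t, v t⟫) atTop (nhds 0))
    -- w^m ⇀ w weakly in L²(0,T;H¹(B)^d)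
    (hwweak : ∀ z : ℝ → H1B, MemLp z 2 (volume.restrict (Ioc 0 T)) →
      Tendsto (fun n => ∫ t in Ioc 0 T, ⟪wm n t - w t, z t⟫) atTop (nhds 0))
    -- the Galerkin constraint c(φ_i(t), (u^m∘X̄)(t) − w^m(t)) = 0, i = 1,…,m
    (hconstraint : ∀ n : ℕ, ∀ᵐ t ∂(volume.restrict (Ioc 0 T)),
      ∀ i < n, ⟪comp t (ψ i), comp t (um n t) - wm n t⟫ = 0) :
    -- u^m∘X̄ ⇀ u∘X̄ weakly in L²(0,T;H¹(B)^d)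
    (∀ z : ℝ → H1B, MemLp z 2 (volume.restrict (Ioc 0 T)) →
      Tendsto (fun n => ∫ t in Ioc 0 T, ⟪comp t (um n t) - comp t (u t), z t⟫)
        atTop (nhds 0)) ∧
    -- the limit pair (u(t), w(t)) belongs to K_t for a.e. t
    (∀ᵐ t ∂(volume.restrict (Ioc 0 T)),
      ∀ μ : H1B, ⟪μ, comp t (u t) - w t⟫ = 0) := by
  have : IsFiniteMeasure (volume.restrict (Ioc 0 T)) := by
    rw [isFiniteMeasure_restrict]; exact measure_Ioc_lt_top.ne
  have : SecondCountableTopologyEither ℝ (V →L[ℝ] H1B) :=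
    secondCountableTopologyEither_of_left _ _
  have hcomp_meas : AEStronglyMeasurable comp (volume.restrict (Ioc 0 T)) :=
    (hcompcont.mono Ioc_subset_Icc_self).aestronglyMeasurable measurableSet_Ioc
  have hcomp_bdd : ∀ᵐ t ∂(volume.restrict (Ioc 0 T)), ‖comp t‖ ≤ M :=
    (ae_restrict_mem measurableSet_Ioc).mono fun t ht => hcompbdd t (Ioc_subset_Icc_self ht)
  have hcomp_memLp {f : ℝ → V} (hf : MemLp f 2 (volume.restrict (Ioc 0 T))) :
      MemLp (fun t => comp t (f t)) 2 (volume.restrict (Ioc 0 T)) :=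
    hf.clm_apply hcomp_meas hcomp_bdd
  have hcomp_weak : WeakL2Tendsto _ (fun n t => comp t (um n t)) (fun t => comp t (u t)) :=
    WeakL2Tendsto.clm_apply huweak hcomp_meas hcomp_bdd
  refine ⟨hcomp_weak, ?_⟩
  have hdiff_weak := hcomp_weak.sub hwweak (fun n => hcomp_memLp (hum n)) (hcomp_memLp hu) hwm hw
  have horth : ∀ᵐ t ∂(volume.restrict (Ioc 0 T)),
      ∀ i, ⟪comp t (ψ i), comp t (u t) - w t⟫ = 0 :=
    ae_all_iff.2 fun i => hdiff_weak.ae_inner_eq_zero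
      (fun n => (hcomp_memLp (hum n)).sub (hwm n)) ((hcomp_memLp hu).sub hw)
      (hcomp_memLp (memLp_const (ψ i)))
      ((eventually_gt_atTop i).mono fun n hn => (hconstraint n).mono fun t ht => ht i hn)
  filter_upwards [horth, ae_restrict_mem measurableSet_Ioc] with t ht htT μ
  rw [hbasis t htT _ ht, inner_zero_right]

theorem weak_limit_belongs_to_Kt
    (V H1B : Type)
    [NormedAddCommGroup V] [InnerProductSpace ℝ V] [CompleteSpace V]
    [NormedAddCommGroup H1B] [InnerProductSpace ℝ H1B] [CompleteSpace H1B]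
    (T : ℝ) (hT : 0 < T)
    -- composition with X̄(t) (Assumption 1): bounded uniformly and continuous in t
    (comp : ℝ → V →L[ℝ] H1B) (M : ℝ)
    (hcompcont : ContinuousOn comp (Icc 0 T))
    (hcompbdd : ∀ t ∈ Icc 0 T, ‖comp t‖ ≤ M)
    (ψ : ℕ → V)
    -- for each t, {φ_i(t)} = {comp t (ψ i)} is a basis (a total family) of H¹(B)^d
    (hbasis : ∀ t ∈ Ioc 0 T, ∀ z : H1B,
      (∀ i : ℕ, ⟪comp t (ψ i), z⟫ = 0) → z = 0)
    (um : ℕ → ℝ → V) (u : ℝ → V) (wm : ℕ → ℝ → H1B) (w : ℝ → H1B)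
    (hum : ∀ n, MemLp (um n) 2 (volume.restrict (Ioc 0 T)))
    (hu : MemLp u 2 (volume.restrict (Ioc 0 T)))
    (hwm : ∀ n, MemLp (wm n) 2 (volume.restrict (Ioc 0 T)))
    (hw : MemLp w 2 (volume.restrict (Ioc 0 T)))
    -- u^m ⇀ u weakly in L²(0,T;H¹₀(Ω)^d)
    (huweak : ∀ v : ℝ → V, MemLp v 2 (volume.restrict (Ioc 0 T)) →
      Tendsto (fun n => ∫ t in Ioc 0 T, ⟪um n t - u t, v t⟫) atTop (nhds 0))
    -- w^m ⇀ w weakly in L²(0,T;H¹(B)^d)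
    (hwweak : ∀ z : ℝ → H1B, MemLp z 2 (volume.restrict (Ioc 0 T)) →
      Tendsto (fun n => ∫ t in Ioc 0 T, ⟪wm n t - w t, z t⟫) atTop (nhds 0))
    -- the Galerkin constraint c(φ_i(t), (u^m∘X̄)(t) − w^m(t)) = 0, i = 1,…,m
    (hconstraint : ∀ n : ℕ, ∀ᵐ t ∂(volume.restrict (Ioc 0 T)),
      ∀ i < n, ⟪comp t (ψ i), comp t (um n t) - wm n t⟫ = 0) :
    -- u^m∘X̄ ⇀ u∘X̄ weakly in L²(0,T;H¹(B)^d)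
    (∀ z : ℝ → H1B, MemLp z 2 (volume.restrict (Ioc 0 T)) →
      Tendsto (fun n => ∫ t in Ioc 0 T, ⟪comp t (um n t) - comp t (u t), z t⟫)
        atTop (nhds 0)) ∧
    -- the limit pair (u(t), w(t)) belongs to K_t for a.e. t
    (∀ᵐ t ∂(volume.restrict (Ioc 0 T)),
      ∀ μ : H1B, ⟪μ, comp t (u t) - w t⟫ = 0) :=
  weak_limit_belongs_to_Kt_general V H1B T comp M hcompcont hcompbdd ψ hbasis um u wm w hum hu hwm
    hw huweak hwweak hconstraint
end
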